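/- arXiv:2204.06141 — 6 statements merged into one kernel-verified Lean document; each statement's English description precedes it below -/
import Mathlib

section
/- Define the piling Π(u) ∈ (A*)^D of a finite word u over the alphabet ⊔_{i=1}^{D}(G_i ∖ {e}) by the inductive rules for appending a letter. Then: (a) if s_i ∈ G_i ∖ {e} and s_j ∈ G_j ∖ {e} with v_i and v_j adjacent in Γ, then Π(u s_i s_j) = Π(u s_j s_i) for every word u; (b) Π(u s_i s_i^{-1}) = Π(u) for every word u and every s_i ∈ G_i ∖ {e}. Consequently, any two finite words over ⊔_i (G_i ∖ {e}) representing the same element of G(Γ) have equal pilings, so Π induces a well-defined map Π : G(Γ) → (A*)^D. -/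
open MeasureTheory ProbabilityTheory
open scoped Classical ENNReal

namespace GraphProductDrift

variable {D : ℕ}

/-- The commutation relators of a graph product. -/
def Rels (Γ : SimpleGraph (Fin D)) (G : Fin D → Type*) [∀ i, Group (G i)] :
    Set (Monoid.CoprodI G) :=
  { x | ∃ (i j : Fin D) (g : G i) (h : G j), Γ.Adj i j ∧
      x = Monoid.CoprodI.of g * Monoid.CoprodI.of h *
        (Monoid.CoprodI.of g)⁻¹ * (Monoid.CoprodI.of h)⁻¹ }

/-- The graph product of the family of groups `G` over the graph `Γ`. -/
abbrev GP (Γ : SimpleGraph (Fin D)) (G : Fin D → Type*) [∀ i, Group (G i)] : Type _ :=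
  Monoid.CoprodI G ⧸ Subgroup.normalClosure (Rels Γ G)

/-- The canonical map from a vertex group to the graph product. -/
def of (Γ : SimpleGraph (Fin D)) {G : Fin D → Type*} [∀ i, Group (G i)] (i : Fin D) :
    G i →* GP Γ G :=
  (QuotientGroup.mk' _).comp Monoid.CoprodI.of

/-- The image in the graph product of a word in the alphabet `⊔ᵢ Gᵢ`. -/
def prodOfWord (Γ : SimpleGraph (Fin D)) {G : Fin D → Type*} [∀ i, Group (G i)]
    (u : List (Σ i, G i)) : GP Γ G :=
  (u.map fun l => of Γ l.1 l.2).prod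

/-- A piling: a list of `D` strings, the `i`-th string over the alphabet
`{0} ⊔ (Gᵢ ∖ {e})`, where `none` plays the role of `0`. -/
abbrev PilingT (G : Fin D → Type*) : Type _ := ∀ i : Fin D, List (Option (G i))

/-- Replace the `i`-th string of a piling. -/
def setAt {G : Fin D → Type*} (P : PilingT G) (i : Fin D) (l : List (Option (G i))) :
    PilingT G :=
  fun j => if h : j = i then h ▸ l else P j

/-- Append a single letter `g ∈ Gᵢ` to a piling, following Crisp–Godelle–Wiest. -/
noncomputable def appendLetter (Γ : SimpleGraph (Fin D)) {G : Fin D → Type*} [∀ i, Group (G i)]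
    (P : PilingT G) (i : Fin D) (g : G i) : PilingT G :=
  match (P i).getLast? with
  | some (some g') =>
      if g' * g = 1 then
        fun j => if j = i ∨ (j ≠ i ∧ ¬ Γ.Adj i j) then (P j).dropLast else P j
      else
        setAt P i ((P i).dropLast ++ [some (g' * g)])
  | _ =>
      setAt (fun j => if j ≠ i ∧ ¬ Γ.Adj i j then P j ++ [none] else P j) i
        (P i ++ [some g])

/-- The piling of a word in the alphabet `⊔ᵢ (Gᵢ ∖ {e})`. -/
noncomputable def pilingOfWord (Γ : SimpleGraph (Fin D)) {G : Fin D → Type*} [∀ i, Group (G i)]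
    (u : List (Σ i, G i)) : PilingT G :=
  u.foldl (fun P l => appendLetter Γ P l.1 l.2) (fun _ => [])

/-- The terminal clique of a piling: vertices whose string ends in a
nontrivial group element. -/
def termClique {G : Fin D → Type*} [∀ i, Group (G i)] (P : PilingT G) : Set (Fin D) :=
  { i | ∃ g : G i, g ≠ 1 ∧ (P i).getLast? = some (some g) }

/-- The initial clique of a piling: vertices whose string starts with a
nontrivial group element. -/
def initClique {G : Fin D → Type*} [∀ i, Group (G i)] (P : PilingT G) : Set (Fin D) :=
  { i | ∃ g : G i, g ≠ 1 ∧ (P i).head? = some (some g) }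

/-- The syllable length of an element of a graph product. -/
noncomputable def syl (Γ : SimpleGraph (Fin D)) {G : Fin D → Type*} [∀ i, Group (G i)]
    (g : GP Γ G) : ℕ :=
  sInf { n | ∃ u : List (Σ i, G i), u.length = n ∧
    u.Chain' (fun a b => a.1 ≠ b.1) ∧ prodOfWord Γ u = g }

/-- One piling is a componentwise prefix of another. -/
def PilingPrefix {G : Fin D → Type*} (P Q : PilingT G) : Prop :=
  ∀ i, (P i) <+: (Q i)

/-- The position of the sample path after `k` steps:
`Z_k = s₁w₁ ⋯ s_k w_k`. -/
def Zpath (Γ : SimpleGraph (Fin D)) {G : Fin D → Type*} [∀ i, Group (G i)]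
    (s : ℕ → Σ i, G i) (w : ℕ → GP Γ G) (k : ℕ) : GP Γ G :=
  ((List.range k).map (fun m => of Γ (s m).1 (s m).2 * w m)).prod

/-- `k` is a pivotal time (`0`-indexed: this corresponds to the pivotal time `k+1`
in `1`-indexed notation) of the path `(s₁, w₁, …, sₙ, wₙ)`, with respect to the
piling map `Π`. -/
def IsPivotal (Γ : SimpleGraph (Fin D)) {G : Fin D → Type*} [∀ i, Group (G i)]
    (Pi : GP Γ G → PilingT G) (s : ℕ → Σ i, G i) (w : ℕ → GP Γ G) (n k : ℕ) : Prop :=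
  k < n ∧
  (∀ m, k < m → m ≤ n → PilingPrefix (Pi (Zpath Γ s w k * of Γ (s k).1 (s k).2))
      (Pi (Zpath Γ s w m))) ∧
  (∀ m, k < m → m < n → PilingPrefix (Pi (Zpath Γ s w k * of Γ (s k).1 (s k).2))
      (Pi (Zpath Γ s w m * of Γ (s m).1 (s m).2))) ∧
  (s k).1 ∉ termClique (Pi (Zpath Γ s w k)) ∧
  termClique (Pi (Zpath Γ s w k * of Γ (s k).1 (s k).2)) ∩ initClique (Pi (w k)) = ∅

/-- The number of pivotal times of the path `(s₁, w₁, …, sₙ, wₙ)`. -/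
noncomputable def numPivotal (Γ : SimpleGraph (Fin D)) {G : Fin D → Type*} [∀ i, Group (G i)]
    (Pi : GP Γ G → PilingT G) (s : ℕ → Σ i, G i) (w : ℕ → GP Γ G) (n : ℕ) : ℕ :=
  Set.ncard { k | IsPivotal Γ Pi s w n k }

/-- The maximum size of a clique in `Γ`. -/
noncomputable def cliqueMax (Γ : SimpleGraph (Fin D)) : ℕ :=
  sSup { n | ∃ K : Set (Fin D), Γ.IsClique K ∧ K.ncard = n }

/-- The maximum size of the 1-neighbourhood of a clique in `Γ`. -/
noncomputable def cliqueNbhdMax (Γ : SimpleGraph (Fin D)) : ℕ :=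
  sSup { n | ∃ K : Set (Fin D), Γ.IsClique K ∧
    (K ∪ { v | ∃ u ∈ K, Γ.Adj v u }).ncard = n }

/-- Word length with respect to a set `S` (and the inverses of its elements). -/
noncomputable def wordLength {H : Type*} [Group H] (S : Set H) (g : H) : ℕ :=
  sInf { n | ∃ u : List H, u.length = n ∧ (∀ x ∈ u, x ∈ S ∨ x⁻¹ ∈ S) ∧ u.prod = g }

/-!
Call a piling *normal* if it is built from the empty piling by pushing nontrivial letters
onto strings whose last entry is not a group element. Pilings of words with nontrivial
letters are normal, and a normal piling `P` can be written, for each vertex `i`, as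
`stack Q i x` with `Q` normal and without a letter on top of its `i`-th string. In these
coordinates appending `g ∈ Gᵢ` is just `x ↦ x * g`, so the letters of `Gᵢ` act on normal
pilings through a (right) action of `Gᵢ`. Decomposing at two adjacent vertices `i` and `j`
at once shows that the actions of `Gᵢ` and `Gⱼ` commute. Hence the actions assemble into an
action of the free product that kills the commutation relators, i.e. an action of the graph
product; the piling of an element is the image of the empty piling.
-/

section Piling

variable (Γ : SimpleGraph (Fin D)) {G : Fin D → Type*}

@[simp]
lemma setAt_self (P : PilingT G) (i : Fin D) (l : List (Option (G i))) : setAt P i l i = l := by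
  simp [setAt]

@[simp]
lemma setAt_of_ne (P : PilingT G) {i j : Fin D} (l : List (Option (G i))) (h : j ≠ i) :
    setAt P i l j = P j := by
  simp [setAt, h]

def topLetter (P : PilingT G) (i : Fin D) : Option (G i) :=
  (P i).getLast?.join

noncomputable def pushLetter (P : PilingT G) (i : Fin D) (g : G i) : PilingT G :=
  setAt (fun j => if j ≠ i ∧ ¬ Γ.Adj i j then P j ++ [none] else P j) i (P i ++ [some g])

variable {Γ} {P : PilingT G} {i j k : Fin D}

@[simp]
lemma pushLetter_self (g : G i) : pushLetter Γ P i g i = P i ++ [some g] :=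
  setAt_self _ _ _

lemma pushLetter_of_adj (h : Γ.Adj i k) (g : G i) : pushLetter Γ P i g k = P k := by
  simp [pushLetter, h.ne', h]

lemma pushLetter_of_not_adj (hk : k ≠ i) (h : ¬ Γ.Adj i k) (g : G i) :
    pushLetter Γ P i g k = P k ++ [none] := by
  simp [pushLetter, hk, h]

@[simp]
lemma topLetter_pushLetter_self (g : G i) : topLetter (pushLetter Γ P i g) i = some g := by
  simp [topLetter]

lemma pushLetter_comm (h : Γ.Adj i j) (a : G i) (b : G j) :
    pushLetter Γ (pushLetter Γ P i a) j b = pushLetter Γ (pushLetter Γ P j b) i a := by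
  funext k
  by_cases hki : k = i
  · subst hki
    simp [pushLetter_of_adj h.symm]
  by_cases hkj : k = j
  · subst hkj
    simp [pushLetter_of_adj h]
  simp only [pushLetter, setAt_of_ne _ _ hki, setAt_of_ne _ _ hkj]
  split_ifs <;> simp

variable [∀ i, Group (G i)]

lemma appendLetter_of_topLetter_eq_none (h : topLetter P i = none) (g : G i) :
    appendLetter Γ P i g = pushLetter Γ P i g := by
  unfold appendLetter
  split
  · next g' hg' => simp [topLetter, hg'] at h
  · rfl

lemma appendLetter_pushLetter (a g : G i) :
    appendLetter Γ (pushLetter Γ P i a) i g =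
      if a * g = 1 then P else pushLetter Γ P i (a * g) := by
  have hlast : (pushLetter Γ P i a i).getLast? = some (some a) := by simp
  unfold appendLetter
  rw [hlast]
  dsimp only
  split_ifs with hag
  · funext k
    by_cases hki : k = i
    · subst hki
      simp
    by_cases hk : Γ.Adj i k
    · simp [hki, hk, pushLetter_of_adj hk]
    · simp [hki, hk, pushLetter_of_not_adj hki hk]
  · funext k
    by_cases hki : k = i
    · subst hki
      simp
    · simp only [setAt_of_ne _ _ hki, pushLetter]

inductive IsNormal (Γ : SimpleGraph (Fin D)) : PilingT G → Prop
  | empty : IsNormal Γ fun _ => []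
  | push {P : PilingT G} {i : Fin D} {g : G i} :
      IsNormal Γ P → topLetter P i = none → g ≠ 1 → IsNormal Γ (pushLetter Γ P i g)

theorem IsNormal.exists_eq_pushLetter (hP : IsNormal Γ P) {a : G i}
    (ha : topLetter P i = some a) :
    ∃ Q, IsNormal Γ Q ∧ topLetter Q i = none ∧ a ≠ 1 ∧ P = pushLetter Γ Q i a := by
  induction hP with
  | empty => simp [topLetter] at ha
  | @push P j b hP hPj hb ih =>
    by_cases hji : j = i
    · subst hji
      obtain rfl : b = a := by simpa using ha
      exact ⟨P, hP, hPj, hb, rfl⟩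
    by_cases hadj : Γ.Adj j i
    · rw [topLetter, pushLetter_of_adj hadj] at ha
      obtain ⟨Q, hQ, hQi, ha1, rfl⟩ := ih ha
      have hQj : topLetter Q j = none := by rwa [topLetter, pushLetter_of_adj hadj.symm] at hPj
      refine ⟨pushLetter Γ Q j b, hQ.push hQj hb, ?_, ha1, pushLetter_comm hadj.symm a b⟩
      rwa [topLetter, pushLetter_of_adj hadj]
    · simp [topLetter, pushLetter_of_not_adj (Ne.symm hji) hadj] at ha

variable (Γ) in
/-- `Q` with `x` on top of its `i`-th string, where `x = 1` stands for no letter at all. -/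
noncomputable def stack (Q : PilingT G) (i : Fin D) (x : G i) : PilingT G :=
  if x = 1 then Q else pushLetter Γ Q i x

lemma stack_of_adj (h : Γ.Adj i k) (x : G i) : stack Γ P i x k = P k := by
  unfold stack
  split_ifs
  exacts [rfl, pushLetter_of_adj h x]

lemma topLetter_stack_of_adj (h : Γ.Adj i k) (x : G i) :
    topLetter (stack Γ P i x) k = topLetter P k := by
  rw [topLetter, stack_of_adj h, topLetter]

lemma stack_comm (h : Γ.Adj i j) (x : G i) (y : G j) :
    stack Γ (stack Γ P i x) j y = stack Γ (stack Γ P j y) i x := by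
  unfold stack
  split_ifs
  exacts [rfl, rfl, rfl, pushLetter_comm h x y]

lemma isNormal_stack (hP : IsNormal Γ P) (hPi : topLetter P i = none) (x : G i) :
    IsNormal Γ (stack Γ P i x) := by
  unfold stack
  split_ifs with hx
  exacts [hP, hP.push hPi hx]

lemma IsNormal.exists_eq_stack (hP : IsNormal Γ P) (i : Fin D) :
    ∃ Q x, IsNormal Γ Q ∧ topLetter Q i = none ∧ P = stack Γ Q i x := by
  cases hPi : topLetter P i with
  | none => exact ⟨P, 1, hP, hPi, by simp [stack]⟩
  | some a =>
    obtain ⟨Q, hQ, hQi, ha, rfl⟩ := hP.exists_eq_pushLetter hPi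
    exact ⟨Q, a, hQ, hQi, by simp [stack, ha]⟩

variable (Γ) in
noncomputable def actLetter (P : PilingT G) (i : Fin D) (g : G i) : PilingT G :=
  if g = 1 then P else appendLetter Γ P i g

lemma actLetter_stack (hP : topLetter P i = none) (x g : G i) :
    actLetter Γ (stack Γ P i x) i g = stack Γ P i (x * g) := by
  by_cases hg : g = 1
  · simp [actLetter, hg]
  by_cases hx : x = 1
  · simp [actLetter, stack, hg, hx, appendLetter_of_topLetter_eq_none hP]
  · simp [actLetter, stack, hg, hx, appendLetter_pushLetter]

lemma isNormal_actLetter (hP : IsNormal Γ P) (g : G i) : IsNormal Γ (actLetter Γ P i g) := by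
  obtain ⟨Q, x, hQ, hQi, rfl⟩ := hP.exists_eq_stack i
  rw [actLetter_stack hQi]
  exact isNormal_stack hQ hQi _

lemma IsNormal.actLetter_mul (hP : IsNormal Γ P) (g h : G i) :
    actLetter Γ P i (g * h) = actLetter Γ (actLetter Γ P i g) i h := by
  obtain ⟨Q, x, -, hQi, rfl⟩ := hP.exists_eq_stack i
  simp only [actLetter_stack hQi, mul_assoc]

lemma IsNormal.actLetter_comm (hP : IsNormal Γ P) (hij : Γ.Adj i j) (g : G i) (h : G j) :
    actLetter Γ (actLetter Γ P i g) j h = actLetter Γ (actLetter Γ P j h) i g := by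
  obtain ⟨Q, x, hQ, hQi, rfl⟩ := hP.exists_eq_stack i
  obtain ⟨R, y, -, hRj, rfl⟩ := hQ.exists_eq_stack j
  have hi : ∀ y' : G j, topLetter (stack Γ R j y') i = none := fun y' => by
    rwa [topLetter_stack_of_adj hij.symm] at hQi ⊢
  have hj : ∀ x' : G i, topLetter (stack Γ R i x') j = none := fun x' => by
    rwa [topLetter_stack_of_adj hij]
  calc actLetter Γ (actLetter Γ (stack Γ (stack Γ R j y) i x) i g) j h
      = stack Γ (stack Γ R i (x * g)) j (y * h) := by
        rw [actLetter_stack (hi y), ← stack_comm hij, actLetter_stack (hj _)]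
    _ = stack Γ (stack Γ R j (y * h)) i (x * g) := stack_comm hij _ _
    _ = actLetter Γ (actLetter Γ (stack Γ (stack Γ R j y) i x) j h) i g := by
        rw [← stack_comm hij x y, actLetter_stack (hj x), stack_comm hij, actLetter_stack (hi _)]

variable (Γ G) in
abbrev NormalPiling : Type _ := {P : PilingT G // IsNormal Γ P}

variable (Γ) in
/-- The letters of `Gᵢ` act on normal pilings on the right, hence the `ᵐᵒᵖ`. -/
noncomputable def letterHom (i : Fin D) : G i →* (Function.End (NormalPiling Γ G))ᵐᵒᵖ where
  toFun g := .op fun P => ⟨actLetter Γ P.1 i g, isNormal_actLetter P.2 g⟩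
  map_one' := by
    apply MulOpposite.unop_injective
    funext P
    exact Subtype.ext (if_pos rfl)
  map_mul' g h := by
    apply MulOpposite.unop_injective
    funext P
    exact Subtype.ext (P.2.actLetter_mul g h)

lemma letterHom_commute (hij : Γ.Adj i j) (g : G i) (h : G j) :
    Commute (letterHom Γ i g) (letterHom Γ j h) := by
  apply MulOpposite.unop_injective
  funext P
  exact Subtype.ext (P.2.actLetter_comm hij g h)

variable (Γ G) in
noncomputable def pilingHom : GP Γ G →* (Function.End (NormalPiling Γ G))ᵐᵒᵖ :=
  QuotientGroup.lift _ (Monoid.CoprodI.lift (letterHom Γ)) <|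
    Subgroup.normalClosure_le_normal <| by
      rintro _ ⟨i, j, g, h, hij, rfl⟩
      simp only [SetLike.mem_coe, MonoidHom.mem_ker, ← map_inv, map_mul,
        Monoid.CoprodI.lift_of, (letterHom_commute hij g h).eq]
      rw [mul_assoc (letterHom Γ j h), ← map_mul, mul_inv_cancel, map_one, mul_one, ← map_mul,
        mul_inv_cancel, map_one]

lemma pilingHom_of (g : G i) : pilingHom Γ G (of Γ i g) = letterHom Γ i g := by
  simp [pilingHom, of]

variable (Γ) in
noncomputable def piling (x : GP Γ G) : PilingT G :=
  ((pilingHom Γ G x).unop ⟨fun _ => [], .empty⟩).1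

lemma piling_mul_of (x : GP Γ G) {g : G i} (hg : g ≠ 1) :
    piling Γ (x * of Γ i g) = appendLetter Γ (piling Γ x) i g := by
  simp only [piling, map_mul, MulOpposite.unop_mul, pilingHom_of]
  exact if_neg hg

lemma prodOfWord_concat (u : List (Σ i, G i)) (l : Σ i, G i) :
    prodOfWord Γ (u ++ [l]) = prodOfWord Γ u * of Γ l.1 l.2 := by
  simp [prodOfWord]

lemma pilingOfWord_concat (u : List (Σ i, G i)) (l : Σ i, G i) :
    pilingOfWord Γ (u ++ [l]) = appendLetter Γ (pilingOfWord Γ u) l.1 l.2 := by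
  simp [pilingOfWord]

theorem piling_prodOfWord {u : List (Σ i, G i)} (hu : ∀ l ∈ u, l.2 ≠ 1) :
    piling Γ (prodOfWord Γ u) = pilingOfWord Γ u := by
  induction u using List.reverseRecOn with
  | nil => rfl
  | append_singleton u l ih =>
    simp only [List.mem_append, List.mem_singleton, or_imp, forall_and, forall_eq] at hu
    rw [prodOfWord_concat, piling_mul_of _ hu.2, ih hu.1, pilingOfWord_concat]

lemma of_mul_of_comm (hij : Γ.Adj i j) (g : G i) (h : G j) :
    of Γ i g * of Γ j h = of Γ j h * of Γ i g := by
  rw [← commutatorElement_eq_one_iff_mul_comm, commutatorElement_def]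
  exact (QuotientGroup.eq_one_iff _).2 (Subgroup.subset_normalClosure ⟨i, j, g, h, hij, rfl⟩)

end Piling

/-- The piling of a word is invariant under swapping adjacent
letters from adjacent vertex groups and under free cancellation; consequently
any two words representing the same element of the graph product have equal
pilings, and the piling descends to a well-defined map on the graph product. -/
theorem piling_well_defined {D : ℕ} (Γ : SimpleGraph (Fin D))
    (G : Fin D → Type*) [∀ i, Group (G i)] :
    (∀ (u : List (Σ i, G i)), (∀ l ∈ u, l.2 ≠ 1) →
      ∀ (i j : Fin D) (si : G i) (sj : G j), si ≠ 1 → sj ≠ 1 → Γ.Adj i j →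
        pilingOfWord Γ (u ++ [⟨i, si⟩, ⟨j, sj⟩]) =
          pilingOfWord Γ (u ++ [⟨j, sj⟩, ⟨i, si⟩])) ∧
    (∀ (u : List (Σ i, G i)), (∀ l ∈ u, l.2 ≠ 1) →
      ∀ (i : Fin D) (g : G i), g ≠ 1 →
        pilingOfWord Γ (u ++ [⟨i, g⟩, ⟨i, g⁻¹⟩]) = pilingOfWord Γ u) ∧
    (∀ u v : List (Σ i, G i), (∀ l ∈ u, l.2 ≠ 1) → (∀ l ∈ v, l.2 ≠ 1) →
        prodOfWord Γ u = prodOfWord Γ v → pilingOfWord Γ u = pilingOfWord Γ v) ∧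
    (∃ Pi : GP Γ G → PilingT G, ∀ u : List (Σ i, G i), (∀ l ∈ u, l.2 ≠ 1) →
        Pi (prodOfWord Γ u) = pilingOfWord Γ u) := by
  have hwd : ∀ u v : List (Σ i, G i), (∀ l ∈ u, l.2 ≠ 1) → (∀ l ∈ v, l.2 ≠ 1) →
      prodOfWord Γ u = prodOfWord Γ v → pilingOfWord Γ u = pilingOfWord Γ v :=
    fun u v hu hv huv => by rw [← piling_prodOfWord hu, ← piling_prodOfWord hv, huv]
  refine ⟨?_, ?_, hwd, piling Γ, fun u hu => piling_prodOfWord hu⟩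
  · intro u hu i j si sj hsi hsj hij
    refine hwd _ _ (by simpa [or_imp, forall_and, hsi, hsj] using hu)
      (by simpa [or_imp, forall_and, hsi, hsj] using hu) ?_
    simp [prodOfWord, of_mul_of_comm hij]
  · intro u hu i g hg
    refine hwd _ _ (by simpa [or_imp, forall_and, hg] using hu) hu ?_
    simp [prodOfWord]

end GraphProductDrift
end

section
/- Let g, h be elements of the graph product G(Γ) such that term(g) ∩ init(h) = ∅. Then Π(gh) = Π(g)Π(h), i.e., for each i ∈ {1,…,D} the i-th string of Π(gh) is the concatenation of the i-th string of Π(g) followed by the i-th string of Π(h). -/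
open MeasureTheory ProbabilityTheory
open scoped Classical ENNReal

namespace GraphProductDrift

variable {D : ℕ}

/-!
Represent `h` by a word `v` of minimal length. Then no letter of `v` can be shuffled, past letters
of adjacent vertices, onto an earlier letter of its own vertex group, since the two would merge
and shorten `v`. Building the piling of a reduced word only ever pushes letters, so its
`i`-th string is read off letter by letter: a letter at `i` contributes itself, a letter at a
vertex not adjacent to `i` contributes a `0`, and the others contribute nothing. When
`term(g) ∩ init(h) = ∅`, the concatenation `uv` of reduced words for `g` and `h` is again reduced,
and reading off its strings gives `Π(g)Π(h)`.
-/

theorem _root_.List.exists_eq_append_cons_of_getLast?_filterMap {α β : Type*}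
    {f : α → Option β} {l : List α} {b : β} (h : (l.filterMap f).getLast? = some b) :
    ∃ l₁ a l₂, l = l₁ ++ a :: l₂ ∧ f a = some b ∧ ∀ x ∈ l₂, f x = none := by
  induction l using List.reverseRecOn with
  | nil => simp at h
  | append_singleton l a ih =>
    cases ha : f a with
    | none =>
      obtain ⟨l₁, a', l₂, rfl, hb, hnone⟩ := ih (by simpa [ha] using h)
      exact ⟨l₁, a', l₂ ++ [a], by simp, hb, by simpa [ha, or_imp, forall_and] using hnone⟩
    | some b' =>
      obtain rfl : b' = b := by simpa [ha] using h
      exact ⟨l, a, [], rfl, ha, by simp⟩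

section ReducedWords

variable {Γ : SimpleGraph (Fin D)} {G : Fin D → Type*}

/-- What pushing the letter `l` writes on the `k`-th string of a piling: nothing (`none`),
a `0` (`some none`), or the letter itself. -/
noncomputable def pushEntry (Γ : SimpleGraph (Fin D)) {G : Fin D → Type*} (k : Fin D)
    (l : Σ i, G i) : Option (Option (G k)) :=
  if h : l.1 = k then some (some (h ▸ l.2)) else if Γ.Adj l.1 k then none else some none

lemma pushEntry_self (k : Fin D) (a : G k) : pushEntry Γ k ⟨k, a⟩ = some (some a) := by
  simp [pushEntry]

lemma eq_of_pushEntry_eq_some_some {k : Fin D} {l : Σ i, G i} {x : G k}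
    (h : pushEntry Γ k l = some (some x)) : l = ⟨k, x⟩ := by
  obtain ⟨i, a⟩ := l
  unfold pushEntry at h
  split_ifs at h with hik
  · subst hik
    simp_all
  · simp at h

lemma adj_of_pushEntry_eq_none {k : Fin D} {l : Σ i, G i} (h : pushEntry Γ k l = none) :
    Γ.Adj l.1 k := by
  unfold pushEntry at h
  split_ifs at h with _ hadj
  exact hadj

/-- A word is reduced when no letter can be shuffled leftwards, past letters of adjacent
vertices, onto an earlier letter of its own vertex group. -/
def IsReduced (Γ : SimpleGraph (Fin D)) {G : Fin D → Type*} (v : List (Σ i, G i)) : Prop :=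
  ∀ v₁ l v₂, v = v₁ ++ l :: v₂ → ∀ x, (v₁.filterMap (pushEntry Γ l.1)).getLast? ≠ some (some x)

lemma isReduced_append_singleton_iff {v : List (Σ i, G i)} {l : Σ i, G i} :
    IsReduced Γ (v ++ [l]) ↔ IsReduced Γ v ∧
      ∀ x, (v.filterMap (pushEntry Γ l.1)).getLast? ≠ some (some x) := by
  constructor
  · intro H
    exact ⟨fun v₁ l' v₂ h => H v₁ l' (v₂ ++ [l]) (by simp [h]), H v l [] rfl⟩
  · rintro ⟨H, hl⟩ v₁ l' v₂ h
    rcases List.eq_nil_or_concat v₂ with rfl | ⟨v₂', y, rfl⟩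
    · obtain ⟨rfl, ⟨⟩⟩ := List.append_inj' h rfl
      exact hl
    · obtain ⟨rfl, -⟩ := List.append_inj' (h.trans (by simp) : _ = (v₁ ++ l' :: v₂') ++ [y]) rfl
      exact H v₁ l' v₂' rfl

end ReducedWords

section Pilings

variable {Γ : SimpleGraph (Fin D)} {G : Fin D → Type*} [∀ i, Group (G i)]

lemma appendLetter_apply_of_getLast?_ne {P : PilingT G} {i : Fin D} (g : G i)
    (h : ∀ x, (P i).getLast? ≠ some (some x)) (k : Fin D) :
    appendLetter Γ P i g k = P k ++ (pushEntry Γ k ⟨i, g⟩).toList := by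
  have hpush : appendLetter Γ P i g =
      setAt (fun j => if j ≠ i ∧ ¬ Γ.Adj i j then P j ++ [none] else P j) i (P i ++ [some g]) := by
    unfold appendLetter
    split
    · next g' hg' => exact absurd hg' (h g')
    · rfl
  rw [hpush]
  unfold setAt pushEntry
  by_cases hk : k = i
  · subst hk
    simp
  · by_cases hadj : Γ.Adj i k <;> simp [hk, Ne.symm hk, hadj]

lemma pilingOfWord_append_singleton (v : List (Σ i, G i)) (l : Σ i, G i) :
    pilingOfWord Γ (v ++ [l]) = appendLetter Γ (pilingOfWord Γ v) l.1 l.2 := by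
  simp [pilingOfWord, List.foldl_append]

lemma pilingOfWord_eq_filterMap {v : List (Σ i, G i)} (hv : IsReduced Γ v) (k : Fin D) :
    pilingOfWord Γ v k = v.filterMap (pushEntry Γ k) := by
  induction v using List.reverseRecOn generalizing k with
  | nil => rfl
  | append_singleton w l ih =>
    obtain ⟨hw, hl⟩ := isReduced_append_singleton_iff.mp hv
    rw [pilingOfWord_append_singleton, appendLetter_apply_of_getLast?_ne _ (by rwa [ih hw]),
      ih hw, List.filterMap_append]
    simp only [List.filterMap_cons, List.filterMap_nil]
    cases pushEntry Γ k l <;> rfl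

lemma ne_one_of_mem_filterMap_pushEntry {u : List (Σ i, G i)} (hu : ∀ l ∈ u, l.2 ≠ 1)
    {k : Fin D} {x : G k} (hx : some x ∈ u.filterMap (pushEntry Γ k)) : x ≠ 1 := by
  obtain ⟨l, hl, hlx⟩ := List.mem_filterMap.mp hx
  obtain rfl := eq_of_pushEntry_eq_some_some hlx
  exact hu _ hl

lemma isReduced_append {u v : List (Σ i, G i)} (hu : IsReduced Γ u) (hv : IsReduced Γ v)
    (hu_ne : ∀ l ∈ u, l.2 ≠ 1) (hv_ne : ∀ l ∈ v, l.2 ≠ 1)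
    (hdisj : termClique (fun k => u.filterMap (pushEntry Γ k)) ∩
      initClique (fun k => v.filterMap (pushEntry Γ k)) = ∅) :
    IsReduced Γ (u ++ v) := by
  have hv_letter : ∀ w l v₂, v = w ++ l :: v₂ →
      ∀ x, ((u ++ w).filterMap (pushEntry Γ l.1)).getLast? ≠ some (some x) := by
    rintro w ⟨m, a⟩ v₂ rfl x hx
    rw [List.filterMap_append, List.getLast?_append] at hx
    cases hw : (w.filterMap (pushEntry Γ m)).getLast? with
    | some y =>
      rw [hw, Option.some_or] at hx
      exact hv w _ v₂ rfl x (hw.trans hx)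
    | none =>
      -- `m` starts the piling of `v`, so the piling of `u` must not end in a letter at `m`
      rw [hw, Option.none_or] at hx
      have hterm : m ∈ termClique (fun k => u.filterMap (pushEntry Γ k)) :=
        ⟨x, ne_one_of_mem_filterMap_pushEntry hu_ne (List.mem_of_getLast? hx), hx⟩
      have hinit : m ∈ initClique (fun k => (w ++ ⟨m, a⟩ :: v₂).filterMap (pushEntry Γ k)) :=
        ⟨a, hv_ne ⟨m, a⟩ (by simp), by simp [List.getLast?_eq_none_iff.mp hw, pushEntry_self]⟩
      exact Set.eq_empty_iff_forall_notMem.mp hdisj m ⟨hterm, hinit⟩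
  intro v₁ l v₂ h
  rcases List.append_eq_append_iff.mp h with ⟨w, rfl, hw⟩ | ⟨_ | ⟨l', c⟩, rfl, hc⟩
  · exact hv_letter w l v₂ hw
  · simpa using hv_letter [] l v₂ (by simpa using hc.symm)
  · obtain ⟨rfl, -⟩ := List.cons.inj hc
    exact hu v₁ l c rfl

end Pilings

section Products

variable {Γ : SimpleGraph (Fin D)} {G : Fin D → Type*} [∀ i, Group (G i)]

lemma commute_of_adj {i j : Fin D} (h : Γ.Adj i j) (g : G i) (g' : G j) :
    Commute (of Γ i g) (of Γ j g') := by
  have hrel : of Γ i g * of Γ j g' * (of Γ i g)⁻¹ * (of Γ j g')⁻¹ = 1 := by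
    have hmem : Monoid.CoprodI.of g * Monoid.CoprodI.of g' * (Monoid.CoprodI.of g)⁻¹ *
        (Monoid.CoprodI.of g')⁻¹ ∈ Subgroup.normalClosure (Rels Γ G) :=
      Subgroup.subset_normalClosure ⟨i, j, g, g', h, rfl⟩
    simpa [of] using (QuotientGroup.eq_one_iff _).mpr hmem
  exact mul_inv_eq_iff_eq_mul.mp (mul_inv_eq_one.mp hrel)

lemma prodOfWord_append (u v : List (Σ i, G i)) :
    prodOfWord Γ (u ++ v) = prodOfWord Γ u * prodOfWord Γ v := by
  simp [prodOfWord]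

lemma prodOfWord_cons (l : Σ i, G i) (u : List (Σ i, G i)) :
    prodOfWord Γ (l :: u) = of Γ l.1 l.2 * prodOfWord Γ u := by
  simp [prodOfWord]

lemma exists_word (x : GP Γ G) :
    ∃ u : List (Σ i, G i), (∀ l ∈ u, l.2 ≠ 1) ∧ prodOfWord Γ u = x := by
  obtain ⟨y, rfl⟩ := QuotientGroup.mk'_surjective (Subgroup.normalClosure (Rels Γ G)) x
  induction y using Monoid.CoprodI.induction_on with
  | one => exact ⟨[], by simp, by simp [prodOfWord]⟩
  | of i m =>
    by_cases hm : m = 1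
    · exact ⟨[], by simp, by simp [prodOfWord, hm]⟩
    · exact ⟨[⟨i, m⟩], by simpa using hm, by simp [prodOfWord, of]⟩
  | mul y z ihy ihz =>
    obtain ⟨u, hu, hyu⟩ := ihy
    obtain ⟨v, hv, hzv⟩ := ihz
    exact ⟨u ++ v, by simpa [or_imp, forall_and] using ⟨hu, hv⟩,
      by rw [prodOfWord_append, hyu, hzv, map_mul]⟩

/-- The new letter is absorbed into the last letter at `m` of `w`, which commutes with everything
after it. -/
lemma exists_word_absorbing_letter {w : List (Σ i, G i)} (hw : ∀ l ∈ w, l.2 ≠ 1) {m : Fin D}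
    {x : G m} (h : (w.filterMap (pushEntry Γ m)).getLast? = some (some x)) (c : G m) :
    ∃ w' : List (Σ i, G i), (∀ l ∈ w', l.2 ≠ 1) ∧ w'.length ≤ w.length ∧
      prodOfWord Γ w' = prodOfWord Γ w * of Γ m c := by
  obtain ⟨a, e, b, rfl, he, hb⟩ := List.exists_eq_append_cons_of_getLast?_filterMap h
  obtain rfl := eq_of_pushEntry_eq_some_some he
  have hcomm : Commute (prodOfWord Γ b) (of Γ m c) := by
    refine Commute.list_prod_left _ _ ?_
    simp only [List.mem_map]
    rintro _ ⟨l, hl, rfl⟩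
    exact commute_of_adj (adj_of_pushEntry_eq_none (hb l hl)) _ _
  have hprod : prodOfWord Γ (a ++ ⟨m, x⟩ :: b) * of Γ m c =
      prodOfWord Γ a * of Γ m (x * c) * prodOfWord Γ b := by
    rw [prodOfWord_append, prodOfWord_cons, mul_assoc, mul_assoc, hcomm.eq, map_mul]
    simp only [mul_assoc]
  by_cases hxc : x * c = 1
  · refine ⟨a ++ b, fun l hl => hw l ?_, by simp, ?_⟩
    · simp only [List.mem_append, List.mem_cons] at hl ⊢
      tauto
    · rw [hprod, hxc, map_one, mul_one, prodOfWord_append]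
  · refine ⟨a ++ ⟨m, x * c⟩ :: b, fun l hl => ?_, by simp, ?_⟩
    · simp only [List.mem_append, List.mem_cons] at hl
      rcases hl with hl | rfl | hl
      · exact hw l (by simp [hl])
      · exact hxc
      · exact hw l (by simp [hl])
    · rw [hprod, prodOfWord_append, prodOfWord_cons, mul_assoc]

lemma isReduced_of_forall_length_le {v : List (Σ i, G i)} (hv : ∀ l ∈ v, l.2 ≠ 1)
    (hmin : ∀ v' : List (Σ i, G i), (∀ l ∈ v', l.2 ≠ 1) →
      prodOfWord Γ v' = prodOfWord Γ v → v.length ≤ v'.length) :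
    IsReduced Γ v := by
  induction v using List.reverseRecOn with
  | nil => rintro v₁ l v₂ h; simp at h
  | append_singleton w l ih =>
    have hw : ∀ l ∈ w, l.2 ≠ 1 := fun l hl => hv l (by simp [hl])
    refine isReduced_append_singleton_iff.mpr ⟨ih hw fun w' hw' hprod => ?_, fun x hx => ?_⟩
    · have := hmin (w' ++ [l]) (by simpa [or_imp, forall_and] using ⟨hw', hv l (by simp)⟩)
        (by rw [prodOfWord_append, prodOfWord_append, hprod])
      simpa using this
    · obtain ⟨w', hw', hlen, hprod⟩ := exists_word_absorbing_letter hw hx l.2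
      have := hmin w' hw' (by rw [hprod, prodOfWord_append]; simp [prodOfWord])
      simp only [List.length_append, List.length_singleton] at this
      omega

lemma exists_isReduced (x : GP Γ G) :
    ∃ v : List (Σ i, G i), IsReduced Γ v ∧ (∀ l ∈ v, l.2 ≠ 1) ∧ prodOfWord Γ v = x := by
  have hex : ∃ n, ∃ v : List (Σ i, G i), v.length = n ∧ (∀ l ∈ v, l.2 ≠ 1) ∧
      prodOfWord Γ v = x :=
    let ⟨v, hv⟩ := exists_word x
    ⟨_, v, rfl, hv⟩
  obtain ⟨v, hlen, hv, rfl⟩ := Nat.find_spec hex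
  refine ⟨v, isReduced_of_forall_length_le hv fun v' hv' hprod => ?_, hv, rfl⟩
  exact hlen ▸ Nat.find_min' hex ⟨v', rfl, hv', hprod⟩

end Products

/-- If `term(g) ∩ init(h) = ∅` then `Π(gh)` is the
componentwise concatenation `Π(g)Π(h)`. -/
theorem piling_mul_of_disjoint {D : ℕ} (Γ : SimpleGraph (Fin D))
    (G : Fin D → Type*) [∀ i, Group (G i)]
    (Pi : GP Γ G → PilingT G)
    (hPi : ∀ u : List (Σ i, G i), (∀ l ∈ u, l.2 ≠ 1) →
      Pi (prodOfWord Γ u) = pilingOfWord Γ u)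
    (g h : GP Γ G)
    (hdisj : termClique (Pi g) ∩ initClique (Pi h) = ∅) :
    Pi (g * h) = fun i => Pi g i ++ Pi h i := by
  have hPi_reduced : ∀ u, IsReduced Γ u → (∀ l ∈ u, l.2 ≠ 1) →
      Pi (prodOfWord Γ u) = fun k => u.filterMap (pushEntry Γ k) :=
    fun u hu hu' => (hPi u hu').trans (funext (pilingOfWord_eq_filterMap hu))
  obtain ⟨u, hu, hu', rfl⟩ := exists_isReduced g
  obtain ⟨v, hv, hv', rfl⟩ := exists_isReduced h
  rw [hPi_reduced u hu hu', hPi_reduced v hv hv'] at hdisj ⊢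
  have huv' : ∀ l ∈ u ++ v, l.2 ≠ 1 := by simpa [or_imp, forall_and] using ⟨hu', hv'⟩
  rw [← prodOfWord_append, hPi_reduced _ (isReduced_append hu hv hu' hv' hdisj) huv']
  simp only [List.filterMap_append]

end GraphProductDrift
end

section
/- Let B, C, D be positive integers with D > 3B + 2C, and let U be the integer-valued random variable with P(U = 1) = (D−(B+C))/D and P(U ≤ −j) = ((B+C)/D)·(B/(D−(B+C)))^{j−1} for every integer j ≥ 1. Then E[U] > 0. -/
/-!
Write `U = 𝟙{U = 1} - U⁻`. Since `P(U = 1) + P(U ≤ -1) = p + q = 1`, this holds almost surely, and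
the tail-sum formula `E[U⁻] = ∑_{j ≥ 1} P(U ≤ -j) = q / (1 - r)` gives `E[U] = p - q / (1 - r)`,
where `p`, `q`, `r` are the three ratios of the statement. As `1 - r = (D - 2B - C) / (D - B - C)`,
this equals `p (D - 3B - 2C) / (D - 2B - C) > 0`.
-/

open MeasureTheory
open scoped ENNReal

section TailSum

variable {Ω : Type*} [MeasurableSpace Ω] {μ : Measure Ω} {N : Ω → ℕ}

lemma natCast_eq_tsum_ite_lt (n : ℕ) :
    (n : ℝ≥0∞) = ∑' j : ℕ, if j < n then 1 else 0 := by
  rw [tsum_eq_sum (s := Finset.range n) fun j hj => by simpa using hj,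
    Finset.sum_ite_of_true fun j hj => Finset.mem_range.1 hj]
  simp

lemma lintegral_natCast_eq_tsum_measure_lt (hN : Measurable N) :
    ∫⁻ ω, (N ω : ℝ≥0∞) ∂μ = ∑' j : ℕ, μ {ω | j < N ω} := by
  have hmeas (j : ℕ) : MeasurableSet {ω | j < N ω} := hN measurableSet_Ioi
  have hpt (ω : Ω) : (N ω : ℝ≥0∞) = ∑' j : ℕ, {ω | j < N ω}.indicator 1 ω := by
    simp only [natCast_eq_tsum_ite_lt, Set.indicator_apply, Set.mem_ofPred_eq, Pi.one_apply]
  simp_rw [hpt]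
  rw [lintegral_tsum fun j => (measurable_one.indicator (hmeas j)).aemeasurable]
  simp_rw [lintegral_indicator_one (hmeas _)]

lemma integrable_natCast_and_integral_eq_of_hasSum {f : ℕ → ℝ} {s : ℝ} (hN : Measurable N)
    (hf : HasSum f s) (hf0 : ∀ j, 0 ≤ f j)
    (htail : ∀ j : ℕ, μ {ω | j < N ω} = ENNReal.ofReal (f j)) :
    Integrable (fun ω => (N ω : ℝ)) μ ∧ ∫ ω, (N ω : ℝ) ∂μ = s := by
  have hlin : ∫⁻ ω, (N ω : ℝ≥0∞) ∂μ = ENNReal.ofReal s := by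
    rw [lintegral_natCast_eq_tsum_measure_lt hN, ← hf.tsum_eq,
      ENNReal.ofReal_tsum_of_nonneg hf0 hf.summable]
    exact tsum_congr htail
  have hae : AEMeasurable (fun ω => (N ω : ℝ≥0∞)) μ :=
    (Measurable.of_discrete.comp hN).aemeasurable
  refine ⟨by simpa using integrable_toReal_of_lintegral_ne_top hae (hlin ▸ ENNReal.ofReal_ne_top),
    ?_⟩
  have := integral_toReal hae (ae_of_all _ fun ω => ENNReal.natCast_lt_top (N ω))
  simp only [ENNReal.toReal_natCast] at this
  rw [this, hlin, ENNReal.toReal_ofReal (hf.nonneg hf0)]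

end TailSum

section TwoSided

variable {Ω : Type*} [MeasurableSpace Ω] {P : Measure Ω} {U : Ω → ℤ}

lemma ae_eq_one_or_le_neg_one [IsProbabilityMeasure P] (hU : Measurable U)
    (hmass : P {ω | U ω = 1} + P {ω | U ω ≤ -1} = 1) :
    ∀ᵐ ω ∂P, U ω = 1 ∨ U ω ≤ -1 := by
  have hdisj : Disjoint {ω | U ω = 1} {ω | U ω ≤ -1} :=
    Set.disjoint_left.2 fun ω h1 h2 => by simp_all
  have hmeas : MeasurableSet {ω | U ω = 1 ∨ U ω ≤ -1} :=
    hU (.of_discrete (s := {u | u = 1 ∨ u ≤ -1}))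
  rw [ae_iff_measure_eq hmeas.nullMeasurableSet, measure_univ, Set.ofPred_or,
    measure_union hdisj (hU measurableSet_Iic), hmass]

theorem integral_intCast_eq_of_geometric_tail [IsProbabilityMeasure P] (hU : Measurable U)
    {p q r : ℝ} (hp : 0 ≤ p) (hq : 0 ≤ q) (hpq : p + q = 1) (hr0 : 0 ≤ r) (hr1 : r < 1)
    (hU1 : P {ω | U ω = 1} = ENNReal.ofReal p)
    (htail : ∀ j : ℕ, 1 ≤ j → P {ω | U ω ≤ -(j : ℤ)} = ENNReal.ofReal (q * r ^ (j - 1))) :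
    ∫ ω, (U ω : ℝ) ∂P = p - q / (1 - r) := by
  have hneg : ∀ j : ℕ, P {ω | j < (-U ω).toNat} = ENNReal.ofReal (q * r ^ j) := by
    intro j
    convert htail (j + 1) (by omega) using 3
    · ext ω
      show _ < _ ↔ _ ≤ _
      omega
    · simp
  obtain ⟨hint, hval⟩ := integrable_natCast_and_integral_eq_of_hasSum
    (N := fun ω => (-U ω).toNat) ((Measurable.of_discrete (f := fun u : ℤ => (-u).toNat)).comp hU)
    ((hasSum_geometric_of_lt_one hr0 hr1).mul_left q) (fun j => by positivity) hneg
  have hmass : P {ω | U ω = 1} + P {ω | U ω ≤ -1} = 1 := by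
    rw [hU1, (by simpa using htail 1 le_rfl : P {ω | U ω ≤ -1} = ENNReal.ofReal q),
      ← ENNReal.ofReal_add hp hq, hpq, ENNReal.ofReal_one]
  have hone : MeasurableSet {ω | U ω = 1} := hU (measurableSet_singleton 1)
  have hdecomp : (fun ω => (U ω : ℝ)) =ᵐ[P]
      fun ω => {ω | U ω = 1}.indicator 1 ω - ((-U ω).toNat : ℝ) := by
    filter_upwards [ae_eq_one_or_le_neg_one hU hmass] with ω hω
    rcases hω with h | h
    · simp [h]
    · rw [Set.indicator_of_notMem (by simp; omega), ← Int.cast_natCast,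
        Int.toNat_of_nonneg (by omega)]
      push_cast
      ring
  rw [integral_congr_ae hdecomp,
    integral_sub (f := {ω | U ω = 1}.indicator 1) ((integrable_const 1).indicator hone) hint,
    integral_indicator_one hone, hval, measureReal_def, hU1, ENNReal.toReal_ofReal hp,
    div_eq_mul_inv]

end TwoSided

lemma div_one_sub_div_lt_of_three_mul_add_two_mul_lt {b c d : ℝ} (hb : 0 ≤ b) (hc : 0 ≤ c)
    (h : 3 * b + 2 * c < d) : (b + c) / d / (1 - b / (d - (b + c))) < (d - (b + c)) / d := by
  have hd : 0 < d := by linarith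
  have hdbc : 0 < d - (b + c) := by linarith
  have hr : 1 - b / (d - (b + c)) = (d - 2 * b - c) / (d - (b + c)) := by
    field_simp; ring
  have hprod : (d - (b + c)) / d * ((d - 2 * b - c) / (d - (b + c))) = (d - 2 * b - c) / d := by
    field_simp
  rw [hr, div_lt_iff₀ (div_pos (by linarith) hdbc), hprod]
  exact div_lt_div_of_pos_right (by linarith) hd

theorem expectation_U_pos_general (B C D : ℕ)
    (h : D > 3 * B + 2 * C)
    (Ω : Type*) [MeasurableSpace Ω] (P : Measure Ω) [IsProbabilityMeasure P]
    (U : Ω → ℤ) (hU : Measurable U)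
    (hU1 : P {ω | U ω = 1} = ENNReal.ofReal (((D:ℝ) - ((B:ℝ) + (C:ℝ))) / (D:ℝ)))
    (hU2 : ∀ j : ℕ, 1 ≤ j → P {ω | U ω ≤ -(j:ℤ)} =
      ENNReal.ofReal ((((B:ℝ) + (C:ℝ)) / (D:ℝ)) *
        ((B:ℝ) / ((D:ℝ) - ((B:ℝ) + (C:ℝ)))) ^ (j - 1))) :
    0 < ∫ ω, ((U ω : ℤ) : ℝ) ∂P := by
  have hD : 3 * (B : ℝ) + 2 * C < D := by exact_mod_cast h
  have hB : (0 : ℝ) ≤ B := B.cast_nonneg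
  have hC : (0 : ℝ) ≤ C := C.cast_nonneg
  have hDBC : 0 < (D : ℝ) - (B + C) := by linarith
  have hr1 : (B : ℝ) / (D - (B + C)) < 1 := (div_lt_one hDBC).2 (by linarith)
  have hpq : ((D : ℝ) - (B + C)) / D + (B + C) / D = 1 := by
    rw [← add_div, sub_add_cancel, div_self (by linarith)]
  rw [integral_intCast_eq_of_geometric_tail hU (by positivity) (by positivity) hpq (by positivity)
    hr1 hU1 hU2, sub_pos]
  exact div_one_sub_div_lt_of_three_mul_add_two_mul_lt hB hC hD

/-- If `D > 3B + 2C` then the integer-valued random variable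
`U` with the given distribution has positive expectation. -/
theorem expectation_U_pos (B C D : ℕ) (hB : 0 < B) (hC : 0 < C) (hD : 0 < D)
    (h : D > 3 * B + 2 * C)
    (Ω : Type*) [MeasurableSpace Ω] (P : Measure Ω) [IsProbabilityMeasure P]
    (U : Ω → ℤ) (hU : Measurable U)
    (hU1 : P {ω | U ω = 1} = ENNReal.ofReal (((D:ℝ) - ((B:ℝ) + (C:ℝ))) / (D:ℝ)))
    (hU2 : ∀ j : ℕ, 1 ≤ j → P {ω | U ω ≤ -(j:ℤ)} =
      ENNReal.ofReal ((((B:ℝ) + (C:ℝ)) / (D:ℝ)) *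
        ((B:ℝ) / ((D:ℝ) - ((B:ℝ) + (C:ℝ)))) ^ (j - 1)))
    (hU0 : ∀ k : ℤ, k ≠ 1 → ¬ k ≤ -1 → P {ω | U ω = k} = 0) :
    0 < ∫ ω, ((U ω : ℤ) : ℝ) ∂P :=
  expectation_U_pos_general B C D h Ω P U hU hU1 hU2
end

section
/- Let B, C, D be positive integers with D > 3B + 2C, and let U be the integer-valued random variable with P(U = 1) = (D−(B+C))/D and P(U ≤ −j) = ((B+C)/D)·(B/(D−(B+C)))^{j−1} for every integer j ≥ 1. Then there exists t > 0 with E[e^{−tU}] < 1; in particular there exists κ > 0 with κ < (−ln E[e^{−tU}])/(1+t). -/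
open MeasureTheory ProbabilityTheory
open scoped ENNReal

/-!
With `q = (B + C) / D` and `r = B / (D - (B + C))`, `U` is `1` with probability `1 - q` and
`-(N + 1)` with probability `q`, where `N` is geometric with parameter `r`. Hence, for `a = e^t`,
`E[e^(-tU)] = (1 - q) / a + q (1 - r) a / (1 - r a)`, and this minus `1` factors as
`(a - 1) ((q (1 - r) + r) a - (1 - q)) / (a (1 - r a))`. It is therefore negative for `a`
slightly above `1` as soon as `q (1 - r) + r < 1 - q`, and `1 - q - (q (1 - r) + r)` is exactly
`(D - 3B - 2C) / D`.
-/

/-- `E[a^(-U)]` when `P(U = 1) = 1 - q` and `P(U = -(n + 1)) = q (1 - r) r^n`. -/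
noncomputable def negGenFun (q r a : ℝ) : ℝ := (1 - q) / a + q * (1 - r) * a / (1 - r * a)

section IntegerValued

variable {Ω : Type*} [MeasurableSpace Ω] {P : Measure Ω} {U : Ω → ℤ}

lemma lintegral_comp_eq_tsum_mul_measure (hU : Measurable U) (g : ℤ → ℝ≥0∞) :
    ∫⁻ ω, g (U ω) ∂P = ∑' k : ℤ, g k * P {ω | U ω = k} := by
  rw [← lintegral_map (measurable_of_countable g) hU, lintegral_countable']
  refine tsum_congr fun k => ?_
  rw [Measure.map_apply hU (measurableSet_singleton k)]
  rfl

lemma measure_eq_neg_succ_add_measure_le (hU : Measurable U) (n : ℕ) :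
    P {ω | U ω = -((n : ℤ) + 1)} + P {ω | U ω ≤ -((n + 2 : ℕ) : ℤ)} =
      P {ω | U ω ≤ -((n + 1 : ℕ) : ℤ)} := by
  have hle : MeasurableSet {ω | U ω ≤ -((n + 2 : ℕ) : ℤ)} := hU measurableSet_Iic
  rw [← measure_union _ hle]
  · congr 1
    ext ω
    simp only [Set.mem_ofPred_eq, Set.mem_union]
    omega
  · refine Set.disjoint_left.2 fun ω h₁ h₂ => ?_
    simp only [Set.mem_ofPred_eq] at h₁ h₂
    omega

lemma measure_eq_neg_succ_of_measure_le {q r : ℝ} (hq : 0 ≤ q) (hr₀ : 0 ≤ r) (hr₁ : r ≤ 1)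
    (hU : Measurable U)
    (htail : ∀ j : ℕ, 1 ≤ j → P {ω | U ω ≤ -(j : ℤ)} = ENNReal.ofReal (q * r ^ (j - 1)))
    (n : ℕ) : P {ω | U ω = -((n : ℤ) + 1)} = ENNReal.ofReal (q * (1 - r) * r ^ n) := by
  have hsplit := measure_eq_neg_succ_add_measure_le (P := P) hU n
  rw [htail _ (by omega), htail _ (by omega), Nat.add_sub_cancel,
    show n + 2 - 1 = n + 1 by omega,
    show q * r ^ n = q * (1 - r) * r ^ n + q * r ^ (n + 1) by ring,
    ENNReal.ofReal_add (by positivity) (by positivity)] at hsplit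
  exact (ENNReal.add_left_inj ENNReal.ofReal_ne_top).1 hsplit

lemma lintegral_exp_neg_mul_eq {q r t : ℝ} (hq₀ : 0 ≤ q) (hq₁ : q ≤ 1) (hr₀ : 0 ≤ r)
    (hr₁ : r ≤ 1) (hrt : r * Real.exp t < 1) (hU : Measurable U)
    (hU1 : P {ω | U ω = 1} = ENNReal.ofReal (1 - q))
    (htail : ∀ j : ℕ, 1 ≤ j → P {ω | U ω ≤ -(j : ℤ)} = ENNReal.ofReal (q * r ^ (j - 1)))
    (hU0 : ∀ k : ℤ, k ≠ 1 → ¬ k ≤ -1 → P {ω | U ω = k} = 0) :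
    ∫⁻ ω, ENNReal.ofReal (Real.exp (-t * (U ω : ℝ))) ∂P =
      ENNReal.ofReal (negGenFun q r (Real.exp t)) := by
  rw [lintegral_comp_eq_tsum_mul_measure hU (fun k : ℤ => ENNReal.ofReal (Real.exp (-t * k))),
    tsum_of_nat_of_neg_add_one ENNReal.summable ENNReal.summable]
  have hcoef : 0 ≤ q * (1 - r) * Real.exp t :=
    mul_nonneg (mul_nonneg hq₀ (sub_nonneg.2 hr₁)) (Real.exp_pos t).le
  have hpos : ∑' n : ℕ, ENNReal.ofReal (Real.exp (-t * ((n : ℤ) : ℝ))) * P {ω | U ω = n} =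
      ENNReal.ofReal ((1 - q) / Real.exp t) := by
    rw [tsum_eq_single 1 fun n hn => by rw [hU0 n (by exact_mod_cast hn) (by omega), mul_zero],
      Nat.cast_one, hU1, ← ENNReal.ofReal_mul (Real.exp_pos _).le]
    congr 1
    rw [Int.cast_one, mul_one, Real.exp_neg]
    ring
  have hneg : ∀ n : ℕ, ENNReal.ofReal (Real.exp (-t * ((-((n : ℤ) + 1) : ℤ) : ℝ))) *
      P {ω | U ω = -((n : ℤ) + 1)} =
        ENNReal.ofReal (q * (1 - r) * Real.exp t) * ENNReal.ofReal (r * Real.exp t) ^ n := by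
    intro n
    rw [measure_eq_neg_succ_of_measure_le hq₀ hr₀ hr₁ hU htail, ← ENNReal.ofReal_mul (by positivity),
      ← ENNReal.ofReal_pow (by positivity), ← ENNReal.ofReal_mul hcoef]
    congr 1
    push_cast
    rw [show -t * -((n : ℝ) + 1) = n * t + t by ring, Real.exp_add, Real.exp_nat_mul]
    ring
  rw [hpos, tsum_congr hneg, ENNReal.tsum_mul_left, ENNReal.tsum_geometric,
    ← ENNReal.ofReal_one, ← ENNReal.ofReal_sub _ (by positivity),
    ← ENNReal.ofReal_inv_of_pos (by linarith), ← ENNReal.ofReal_mul hcoef,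
    ← ENNReal.ofReal_add (div_nonneg (by linarith) (Real.exp_pos t).le)
      (mul_nonneg hcoef (inv_nonneg.2 (by linarith)))]
  rfl

end IntegerValued

lemma negGenFun_lt_one {q r a : ℝ} (ha : 1 < a) (hra : r * a < 1)
    (hdrift : (q * (1 - r) + r) * a < 1 - q) : negGenFun q r a < 1 := by
  have ha₀ : 0 < a := by linarith
  have hra' : 0 < 1 - r * a := by linarith
  have hne : 1 - r * a ≠ 0 := hra'.ne'
  have hfactor : negGenFun q r a - 1 =
      (a - 1) * ((q * (1 - r) + r) * a - (1 - q)) / (a * (1 - r * a)) := by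
    rw [negGenFun, div_add_div _ _ ha₀.ne' hne, div_sub_one (mul_ne_zero ha₀.ne' hne)]
    ring
  rw [← sub_neg, hfactor]
  exact div_neg_of_neg_of_pos (mul_neg_of_pos_of_neg (by linarith) (by linarith)) (by positivity)

lemma exists_negGenFun_lt_one {q r : ℝ} (hq : 0 ≤ q) (hr₀ : 0 ≤ r) (hr₁ : r < 1)
    (hdrift : q * (1 - r) + r < 1 - q) :
    ∃ t > 0, r * Real.exp t < 1 ∧ 0 < negGenFun q r (Real.exp t) ∧
      negGenFun q r (Real.exp t) < 1 := by
  set M := q * (1 - r) + r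
  have hM : 0 ≤ M := by positivity
  have ha : 1 < 2 - q - M := by linarith
  have hMa : M * (2 - q - M) < 1 - q := by nlinarith
  have hra : r * (2 - q - M) < 1 := by nlinarith
  refine ⟨Real.log (2 - q - M), Real.log_pos ha, ?_⟩
  rw [Real.exp_log (by linarith)]
  refine ⟨hra, add_pos_of_pos_of_nonneg (div_pos (by linarith) (by linarith)) ?_,
    negGenFun_lt_one ha hra hMa⟩
  exact div_nonneg (mul_nonneg (mul_nonneg hq (by linarith)) (by linarith)) (by linarith)

lemma drift_lt_of_three_mul_add_two_mul_lt {B C D : ℝ} (hB : 0 ≤ B) (hC : 0 ≤ C) (h : 3 * B + 2 * C < D) :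
    (B + C) / D * (1 - B / (D - (B + C))) + B / (D - (B + C)) < 1 - (B + C) / D := by
  have hD : 0 < D := by linarith
  have hD' : D - (B + C) ≠ 0 := by linarith
  have hgap : 1 - (B + C) / D - ((B + C) / D * (1 - B / (D - (B + C))) + B / (D - (B + C))) =
      (D - (3 * B + 2 * C)) / D := by
    field_simp
    ring
  rw [← sub_pos, hgap]
  exact div_pos (by linarith) hD

theorem exists_t_mgf_lt_one_general (B C D : ℕ)
    (h : D > 3 * B + 2 * C)
    (Ω : Type*) [MeasurableSpace Ω] (P : Measure Ω) [IsProbabilityMeasure P]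
    (U : Ω → ℤ) (hU : Measurable U)
    (hU1 : P {ω | U ω = 1} = ENNReal.ofReal (((D:ℝ) - ((B:ℝ) + (C:ℝ))) / (D:ℝ)))
    (hU2 : ∀ j : ℕ, 1 ≤ j → P {ω | U ω ≤ -(j:ℤ)} =
      ENNReal.ofReal ((((B:ℝ) + (C:ℝ)) / (D:ℝ)) *
        ((B:ℝ) / ((D:ℝ) - ((B:ℝ) + (C:ℝ)))) ^ (j - 1)))
    (hU0 : ∀ k : ℤ, k ≠ 1 → ¬ k ≤ -1 → P {ω | U ω = k} = 0) :
    ∃ t : ℝ, 0 < t ∧ ∫⁻ ω, ENNReal.ofReal (Real.exp (-t * (U ω : ℝ))) ∂P < 1 ∧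
      ∃ κ : ℝ, 0 < κ ∧
        κ < (- Real.log ((∫⁻ ω, ENNReal.ofReal (Real.exp (-t * (U ω : ℝ))) ∂P).toReal))
          / (1 + t) := by
  have hBCD : (3 * B + 2 * C : ℝ) < D := by exact_mod_cast h
  have hD : (0 : ℝ) < D := by linarith [B.cast_nonneg (α := ℝ), C.cast_nonneg (α := ℝ)]
  have hq₀ : 0 ≤ (B + C : ℝ) / D := by positivity
  have hq₁ : (B + C : ℝ) / D < 1 := (div_lt_one hD).2 (by linarith)
  have hr₀ : 0 ≤ (B : ℝ) / (D - (B + C)) := div_nonneg (by positivity) (by linarith)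
  have hr₁ : (B : ℝ) / (D - (B + C)) < 1 := (div_lt_one (by linarith)).2 (by linarith)
  obtain ⟨t, ht, hrt, hpos, hlt⟩ :=
    exists_negGenFun_lt_one hq₀ hr₀ hr₁ (drift_lt_of_three_mul_add_two_mul_lt (by positivity) (by positivity) hBCD)
  rw [← one_sub_div hD.ne'] at hU1
  have hmgf := lintegral_exp_neg_mul_eq hq₀ hq₁.le hr₀ hr₁.le hrt hU hU1 hU2 hU0
  have hrate : 0 < -Real.log (negGenFun _ _ (Real.exp t)) / (1 + t) :=
    div_pos (neg_pos.2 (Real.log_neg hpos hlt)) (by linarith)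
  refine ⟨t, ht, ?_, ?_⟩ <;> rw [hmgf]
  · exact ENNReal.ofReal_lt_one.2 hlt
  · rw [ENNReal.toReal_ofReal hpos.le]
    exact ⟨_, half_pos hrate, half_lt_self hrate⟩

/-- If `D > 3B + 2C` then there exists `t > 0` with
`E[e^{-tU}] < 1`; in particular there exists `κ > 0` with
`κ < (-ln E[e^{-tU}])/(1+t)`. -/
theorem exists_t_mgf_lt_one (B C D : ℕ) (hB : 0 < B) (hC : 0 < C) (hD : 0 < D)
    (h : D > 3 * B + 2 * C)
    (Ω : Type*) [MeasurableSpace Ω] (P : Measure Ω) [IsProbabilityMeasure P]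
    (U : Ω → ℤ) (hU : Measurable U)
    (hU1 : P {ω | U ω = 1} = ENNReal.ofReal (((D:ℝ) - ((B:ℝ) + (C:ℝ))) / (D:ℝ)))
    (hU2 : ∀ j : ℕ, 1 ≤ j → P {ω | U ω ≤ -(j:ℤ)} =
      ENNReal.ofReal ((((B:ℝ) + (C:ℝ)) / (D:ℝ)) *
        ((B:ℝ) / ((D:ℝ) - ((B:ℝ) + (C:ℝ)))) ^ (j - 1)))
    (hU0 : ∀ k : ℤ, k ≠ 1 → ¬ k ≤ -1 → P {ω | U ω = k} = 0) :
    ∃ t : ℝ, 0 < t ∧ ∫⁻ ω, ENNReal.ofReal (Real.exp (-t * (U ω : ℝ))) ∂P < 1 ∧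
      ∃ κ : ℝ, 0 < κ ∧
        κ < (- Real.log ((∫⁻ ω, ENNReal.ofReal (Real.exp (-t * (U ω : ℝ))) ∂P).toReal))
          / (1 + t) :=
  exists_t_mgf_lt_one_general B C D h Ω P U hU hU1 hU2 hU0
end

section
/- Let B, C, D be positive integers with D > 2B + C, and let U be the integer-valued random variable with P(U = 1) = (D−(B+C))/D and P(U ≤ −j) = ((B+C)/D)·(B/(D−(B+C)))^{j−1} for every integer j ≥ 1. Then for every t > 0 with e^{t}B < D−(B+C), one has E[e^{−tU}] = e^{−t}·(D−B−C)/D + ((B+C)/D)·e^{t}·(D−2B−C)/(D−B−C−e^{t}B). -/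
/-!
The point masses of `U` at `-(n + 1)` are differences of consecutive tail probabilities,
`a rⁿ - a rⁿ⁺¹ = a (1 - r) rⁿ` with `a = (B + C)/D` and `r = B/(D - B - C)`. Hence
`E[e^{-tU}] = e^{-t} P(U = 1) + ∑ₙ e^{(n+1)t} a (1 - r) rⁿ`, a geometric series of ratio
`e^t r < 1`, and the closed form is its sum.
-/

open MeasureTheory
open scoped ENNReal

section IntegerValued

variable {Ω : Type*} [MeasurableSpace Ω] {P : Measure Ω} {U : Ω → ℤ}

theorem lintegral_comp_int_eq_tsum (hU : Measurable U) (g : ℤ → ℝ≥0∞) :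
    ∫⁻ ω, g (U ω) ∂P = ∑' k, g k * P {ω | U ω = k} := by
  rw [← lintegral_map measurable_from_top hU, lintegral_countable']
  congr! 2 with k
  rw [Measure.map_apply hU (measurableSet_singleton k)]
  rfl

theorem measure_eq_sub_measure_le_pred (hU : Measurable U) {k : ℤ}
    (h : P {ω | U ω ≤ k - 1} ≠ ∞) :
    P {ω | U ω = k} = P {ω | U ω ≤ k} - P {ω | U ω ≤ k - 1} := by
  have hdiff : {ω | U ω = k} = {ω | U ω ≤ k} \ {ω | U ω ≤ k - 1} := by
    ext ω; simp only [Set.mem_ofPred_eq, Set.mem_sdiff]; omega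
  rw [hdiff]
  exact measure_sdiff (fun ω (hω : U ω ≤ k - 1) => show U ω ≤ k by omega)
    (hU measurableSet_Iic).nullMeasurableSet h

theorem measure_eq_neg_of_geometric_tail (hU : Measurable U) {a r : ℝ} (ha : 0 ≤ a)
    (hr : 0 ≤ r) (htail : ∀ n : ℕ, P {ω | U ω ≤ -(n + 1 : ℤ)} = ENNReal.ofReal (a * r ^ n))
    (n : ℕ) : P {ω | U ω = -(n + 1 : ℤ)} = ENNReal.ofReal (a * (1 - r) * r ^ n) := by
  have hpred : -(n + 1 : ℤ) - 1 = -((n + 1 : ℕ) + 1 : ℤ) := by push_cast; ring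
  rw [measure_eq_sub_measure_le_pred hU (by rw [hpred, htail]; exact ENNReal.ofReal_ne_top),
    hpred, htail, htail, ← ENNReal.ofReal_sub _ (by positivity)]
  congr 1
  ring

theorem ENNReal.tsum_int_eq_add_tsum_neg {f : ℤ → ℝ≥0∞}
    (hf : ∀ k, k ≠ 1 → ¬ k ≤ -1 → f k = 0) :
    ∑' k, f k = f 1 + ∑' n : ℕ, f (-(n + 1 : ℤ)) := by
  rw [tsum_of_nat_of_neg_add_one ENNReal.summable ENNReal.summable,
    tsum_eq_single (f := fun n : ℕ => f n) 1 fun n hn => hf n (by exact_mod_cast hn) (by omega)]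
  rfl

theorem integral_exp_neg_mul_of_geometric_tail (hU : Measurable U) {p a r t : ℝ}
    (hp : 0 ≤ p) (ha : 0 ≤ a) (hr0 : 0 ≤ r) (hr1 : r ≤ 1) (hrt : Real.exp t * r < 1)
    (h1 : P {ω | U ω = 1} = ENNReal.ofReal p)
    (htail : ∀ n : ℕ, P {ω | U ω ≤ -(n + 1 : ℤ)} = ENNReal.ofReal (a * r ^ n))
    (h0 : ∀ k : ℤ, k ≠ 1 → ¬ k ≤ -1 → P {ω | U ω = k} = 0) :
    ∫ ω, Real.exp (-t * U ω) ∂P =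
      Real.exp (-t) * p + a * (1 - r) * Real.exp t / (1 - Real.exp t * r) := by
  have hneg : ∀ n : ℕ, ENNReal.ofReal (Real.exp (-t * (-(n + 1 : ℤ) : ℤ))) *
      P {ω | U ω = -(n + 1 : ℤ)} =
        ENNReal.ofReal (a * (1 - r) * Real.exp t * (Real.exp t * r) ^ n) := by
    intro n
    rw [measure_eq_neg_of_geometric_tail hU ha hr0 htail,
      ← ENNReal.ofReal_mul (Real.exp_pos _).le]
    have hexp : Real.exp (-t * (-(n + 1 : ℤ) : ℤ)) = Real.exp t * Real.exp t ^ n := by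
      rw [← Real.exp_nat_mul, ← Real.exp_add]; push_cast; ring_nf
    rw [hexp]
    congr 1
    ring
  have hgeom : ∑' n : ℕ, a * (1 - r) * Real.exp t * (Real.exp t * r) ^ n =
      a * (1 - r) * Real.exp t / (1 - Real.exp t * r) := by
    rw [tsum_mul_left, tsum_geometric_of_lt_one (by positivity) hrt, div_eq_mul_inv]
  have hmeas : Measurable fun ω => Real.exp (-t * U ω) :=
    Real.measurable_exp.comp ((measurable_from_top.comp hU).const_mul _)
  have hr1' : 0 ≤ 1 - r := by linarith
  have hrt' : 0 < 1 - Real.exp t * r := by linarith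
  rw [integral_eq_lintegral_of_nonneg_ae (ae_of_all _ fun _ => (Real.exp_pos _).le)
      hmeas.aestronglyMeasurable,
    lintegral_comp_int_eq_tsum hU fun k : ℤ => ENNReal.ofReal (Real.exp (-t * k)),
    ENNReal.tsum_int_eq_add_tsum_neg fun k hk1 hk => by simp [h0 k hk1 hk], h1,
    tsum_congr hneg, ← ENNReal.ofReal_tsum_of_nonneg (fun n => by positivity)
      ((summable_geometric_of_lt_one (by positivity) hrt).mul_left _), hgeom,
    ← ENNReal.ofReal_mul (Real.exp_pos _).le, ← ENNReal.ofReal_add (by positivity)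
      (by positivity), ENNReal.toReal_ofReal (by positivity)]
  simp

end IntegerValued

theorem mgf_U_formula_general (B C D : ℕ)
    (h : D > 2 * B + C)
    (Ω : Type*) [MeasurableSpace Ω] (P : Measure Ω)
    (U : Ω → ℤ) (hU : Measurable U)
    (hU1 : P {ω | U ω = 1} = ENNReal.ofReal (((D:ℝ) - ((B:ℝ) + (C:ℝ))) / (D:ℝ)))
    (hU2 : ∀ j : ℕ, 1 ≤ j → P {ω | U ω ≤ -(j:ℤ)} =
      ENNReal.ofReal ((((B:ℝ) + (C:ℝ)) / (D:ℝ)) *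
        ((B:ℝ) / ((D:ℝ) - ((B:ℝ) + (C:ℝ)))) ^ (j - 1)))
    (hU0 : ∀ k : ℤ, k ≠ 1 → ¬ k ≤ -1 → P {ω | U ω = k} = 0)
    (t : ℝ)
    (hsmall : Real.exp t * (B:ℝ) < (D:ℝ) - ((B:ℝ) + (C:ℝ))) :
    ∫ ω, Real.exp (-t * (U ω : ℝ)) ∂P =
      Real.exp (-t) * (((D:ℝ) - (B:ℝ) - (C:ℝ)) / (D:ℝ)) +
        (((B:ℝ) + (C:ℝ)) / (D:ℝ)) * Real.exp t *
          (((D:ℝ) - 2 * (B:ℝ) - (C:ℝ)) /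
            ((D:ℝ) - (B:ℝ) - (C:ℝ) - Real.exp t * (B:ℝ))) := by
  have hB : (0:ℝ) ≤ B := B.cast_nonneg
  have hC : (0:ℝ) ≤ C := C.cast_nonneg
  have hBD : (B:ℝ) < D - (B + C) := by
    have : (2 * B + C : ℝ) < D := by exact_mod_cast h
    linarith
  have hD : (0:ℝ) < D := by linarith
  have hrt : Real.exp t * (B / (D - (B + C))) < 1 := by
    rwa [← mul_div_assoc, div_lt_one (by linarith)]
  rw [integral_exp_neg_mul_of_geometric_tail hU (a := (B + C) / D) (r := B / (D - (B + C)))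
    (div_nonneg (by linarith) hD.le) (by positivity) (div_nonneg hB (by linarith))
    (div_le_one_of_le₀ hBD.le (by linarith)) hrt hU1
    (fun n => by simpa using hU2 (n + 1) (by omega)) hU0]
  have hratio : (1 - B / (D - (B + C) : ℝ)) / (1 - Real.exp t * (B / (D - (B + C)))) =
      (D - 2 * B - C) / (D - B - C - Real.exp t * B) := by
    have hS : (D:ℝ) - (B + C) ≠ 0 := by linarith
    rw [div_eq_div_iff (by linarith) (by linarith)]
    field_simp
    ring
  rw [← hratio]
  ring

/-- Explicit formula for `E[e^{-tU}]` for the integer-valued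
random variable `U` with the given distribution, valid whenever `t > 0` and
`e^t B < D - (B + C)`. -/
theorem mgf_U_formula (B C D : ℕ) (hB : 0 < B) (hC : 0 < C) (hD : 0 < D)
    (h : D > 2 * B + C)
    (Ω : Type*) [MeasurableSpace Ω] (P : Measure Ω) [IsProbabilityMeasure P]
    (U : Ω → ℤ) (hU : Measurable U)
    (hU1 : P {ω | U ω = 1} = ENNReal.ofReal (((D:ℝ) - ((B:ℝ) + (C:ℝ))) / (D:ℝ)))
    (hU2 : ∀ j : ℕ, 1 ≤ j → P {ω | U ω ≤ -(j:ℤ)} =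
      ENNReal.ofReal ((((B:ℝ) + (C:ℝ)) / (D:ℝ)) *
        ((B:ℝ) / ((D:ℝ) - ((B:ℝ) + (C:ℝ)))) ^ (j - 1)))
    (hU0 : ∀ k : ℤ, k ≠ 1 → ¬ k ≤ -1 → P {ω | U ω = k} = 0)
    (t : ℝ) (ht : 0 < t)
    (hsmall : Real.exp t * (B:ℝ) < (D:ℝ) - ((B:ℝ) + (C:ℝ))) :
    ∫ ω, Real.exp (-t * (U ω : ℝ)) ∂P =
      Real.exp (-t) * (((D:ℝ) - (B:ℝ) - (C:ℝ)) / (D:ℝ)) +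
        (((B:ℝ) + (C:ℝ)) / (D:ℝ)) * Real.exp t *
          (((D:ℝ) - 2 * (B:ℝ) - (C:ℝ)) /
            ((D:ℝ) - (B:ℝ) - (C:ℝ) - Real.exp t * (B:ℝ))) :=
  mgf_U_formula_general B C D h Ω P U hU hU1 hU2 hU0 t hsmall
end

section
/- Let α ∈ (0, 1/2) and let (B_D)_{D} and (C_D)_{D} be sequences of positive integers with B_D = o(D^{1−2α}) and C_D = o(D^{1−2α}) as D → ∞ (so that in particular D > 3B_D + 2C_D for all sufficiently large D). For each such D let U_D be the integer-valued random variable with P(U_D = 1) = (D−(B_D+C_D))/D and P(U_D ≤ −j) = ((B_D+C_D)/D)·(B_D/(D−(B_D+C_D)))^{j−1} for all integers j ≥ 1, and let T_D = { t > 0 : E[e^{−tU_D}] < 1 }. Then sup_{t ∈ T_D} (−ln E[e^{−tU_D}])/(1+t) → 1 as D → ∞. -/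
open MeasureTheory ProbabilityTheory Filter Topology
open scoped ENNReal

/-!
Write `q = (B + C) / D`, `r = B / (D - (B + C))` and `M(t) = E[e^{-tU}]`. Since
`P(U = 1) = 1 - q ≥ e⁻¹`, we have `M(t) ≥ e^{-1-t}`, so every rate `-log M(t) / (1 + t)` is
at most `1`. Conversely, bounding `P(U = -n)` by the tail `P(U ≤ -n) = q r^{n-1}` gives
`M(t) ≤ e^{-t} + q e^t / (1 - r e^t)`; as `r ≤ 2q`, the choice `e^{-t} = q^{1/3}` makes this at
most `2 e^{-t}`, so the rate at that `t` is at least `(t - log 2) / (1 + t)`, which tends to `1`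
because `q → 0` forces `t → ∞`.
-/

theorem lintegral_comp_eq_tsum_measure_fiber {Ω α : Type*} [MeasurableSpace Ω]
    [MeasurableSpace α] [Countable α] [MeasurableSingletonClass α] {P : Measure Ω}
    {X : Ω → α} (hX : Measurable X) (f : α → ℝ≥0∞) :
    ∫⁻ ω, f (X ω) ∂P = ∑' a, f a * P {ω | X ω = a} := by
  rw [← lintegral_map (measurable_of_countable f) hX, lintegral_countable']
  congr 1 with a
  rw [Measure.map_apply hX (measurableSet_singleton a)]
  rfl

section ExpMoment

variable {Ω : Type*} [MeasurableSpace Ω] {P : Measure Ω} {U : Ω → ℤ}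

theorem measure_eq_one_mul_le_lintegral_exp (hU : Measurable U) (t : ℝ) :
    P {ω | U ω = 1} * ENNReal.ofReal (Real.exp (-t))
      ≤ ∫⁻ ω, ENNReal.ofReal (Real.exp (-t * (U ω : ℝ))) ∂P := by
  rw [lintegral_comp_eq_tsum_measure_fiber hU (fun k : ℤ ↦ ENNReal.ofReal (Real.exp (-t * k))),
    mul_comm]
  simpa using ENNReal.le_tsum (f := fun k : ℤ ↦ ENNReal.ofReal (Real.exp (-t * k)) *
    P {ω | U ω = k}) 1

theorem lintegral_exp_le_of_tail_le (hU : Measurable U) {q r t : ℝ} (hq : 0 ≤ q) (hr : 0 ≤ r)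
    (hrt : r * Real.exp t < 1) (hsupp : ∀ n : ℕ, n ≠ 1 → P {ω | U ω = n} = 0)
    (htail : ∀ n : ℕ, P {ω | U ω ≤ -(n + 1 : ℤ)} ≤ ENNReal.ofReal (q * r ^ n)) :
    ∫⁻ ω, ENNReal.ofReal (Real.exp (-t * (U ω : ℝ))) ∂P
      ≤ P {ω | U ω = 1} * ENNReal.ofReal (Real.exp (-t))
        + ENNReal.ofReal (q * Real.exp t / (1 - r * Real.exp t)) := by
  rw [lintegral_comp_eq_tsum_measure_fiber hU (fun k : ℤ ↦ ENNReal.ofReal (Real.exp (-t * k))),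
    tsum_of_nat_of_neg_add_one ENNReal.summable ENNReal.summable,
    tsum_eq_single 1 fun n hn ↦ by rw [hsupp n hn, mul_zero]]
  refine add_le_add (by simp [mul_comm]) ?_
  have hterm (n : ℕ) : ENNReal.ofReal (Real.exp (-t * ((-(n + 1 : ℤ) : ℤ) : ℝ)))
      * P {ω | U ω = -(n + 1 : ℤ)}
        ≤ ENNReal.ofReal (q * Real.exp t * (r * Real.exp t) ^ n) := by
    calc _ ≤ ENNReal.ofReal (Real.exp t * Real.exp t ^ n) * ENNReal.ofReal (q * r ^ n) := by
          gcongr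
          · rw [← Real.exp_nat_mul, ← Real.exp_add, Real.exp_le_exp]; push_cast; linarith
          · exact (measure_mono fun ω (hω : U ω = _) ↦ hω.le).trans (htail n)
      _ = _ := by rw [← ENNReal.ofReal_mul (by positivity)]; ring_nf
  calc _ ≤ ∑' n : ℕ, ENNReal.ofReal (q * Real.exp t * (r * Real.exp t) ^ n) :=
        ENNReal.tsum_le_tsum hterm
    _ = ENNReal.ofReal (q * Real.exp t / (1 - r * Real.exp t)) := by
      rw [← ENNReal.ofReal_tsum_of_nonneg (fun n ↦ by positivity)
        ((summable_geometric_of_lt_one (by positivity) hrt).mul_left _), tsum_mul_left,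
        tsum_geometric_of_lt_one (by positivity) hrt, div_eq_mul_inv]

def driftRates (P : Measure Ω) (U : Ω → ℤ) : Set ℝ :=
  { x : ℝ | ∃ t : ℝ, 0 < t ∧
    (∫⁻ ω, ENNReal.ofReal (Real.exp (-t * (U ω : ℝ))) ∂P) < 1 ∧
    x = (- Real.log ((∫⁻ ω, ENNReal.ofReal (Real.exp (-t * (U ω : ℝ))) ∂P).toReal))
      / (1 + t) }

section

variable (hU : Measurable U) (h1 : ENNReal.ofReal (Real.exp (-1)) ≤ P {ω | U ω = 1})
include hU h1

theorem exp_neg_one_add_le_lintegral_exp (t : ℝ) :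
    ENNReal.ofReal (Real.exp (-(1 + t)))
      ≤ ∫⁻ ω, ENNReal.ofReal (Real.exp (-t * (U ω : ℝ))) ∂P := by
  calc _ = ENNReal.ofReal (Real.exp (-1)) * ENNReal.ofReal (Real.exp (-t)) := by
        rw [← ENNReal.ofReal_mul (Real.exp_pos _).le, ← Real.exp_add, neg_add]
    _ ≤ _ := (mul_le_mul_left h1 _).trans (measure_eq_one_mul_le_lintegral_exp hU t)

theorem exp_neg_one_add_le_toReal_lintegral_exp {t : ℝ}
    (hlt : ∫⁻ ω, ENNReal.ofReal (Real.exp (-t * (U ω : ℝ))) ∂P < 1) :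
    Real.exp (-(1 + t))
      ≤ (∫⁻ ω, ENNReal.ofReal (Real.exp (-t * (U ω : ℝ))) ∂P).toReal :=
  (ENNReal.ofReal_le_iff_le_toReal (hlt.trans ENNReal.one_lt_top).ne).1
    (exp_neg_one_add_le_lintegral_exp hU h1 t)

theorem driftRates_le_one : ∀ x ∈ driftRates P U, x ≤ 1 := by
  rintro x ⟨t, ht, hlt, rfl⟩
  rw [div_le_one (by linarith), neg_le]
  calc -(1 + t) = Real.log (Real.exp (-(1 + t))) := (Real.log_exp _).symm
    _ ≤ _ := Real.log_le_log (Real.exp_pos _) (exp_neg_one_add_le_toReal_lintegral_exp hU h1 hlt)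

theorem le_sSup_driftRates {t : ℝ} (ht : Real.log 2 < t)
    (hle : ∫⁻ ω, ENNReal.ofReal (Real.exp (-t * (U ω : ℝ))) ∂P
      ≤ ENNReal.ofReal (2 * Real.exp (-t))) :
    (t - Real.log 2) / (1 + t) ≤ sSup (driftRates P U) := by
  set M := ∫⁻ ω, ENNReal.ofReal (Real.exp (-t * (U ω : ℝ))) ∂P
  have hlog2 : 0 < Real.log 2 := Real.log_pos one_lt_two
  have h2 : 2 * Real.exp (-t) < 1 := by
    have := Real.exp_lt_exp.2 (neg_lt_neg ht)
    rw [Real.exp_neg (Real.log 2), Real.exp_log two_pos] at this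
    linarith
  have hlt : M < 1 := hle.trans_lt (ENNReal.ofReal_lt_one.2 h2)
  have hM : M.toReal ≤ 2 * Real.exp (-t) := ENNReal.toReal_le_of_le_ofReal (by positivity) hle
  have hM0 : 0 < M.toReal :=
    (Real.exp_pos _).trans_le (exp_neg_one_add_le_toReal_lintegral_exp hU h1 hlt)
  refine le_csSup ⟨1, driftRates_le_one hU h1⟩ ⟨t, hlog2.trans ht, hlt, rfl⟩ |>.trans' ?_
  refine div_le_div_of_nonneg_right ?_ (by linarith)
  calc t - Real.log 2 = -Real.log (2 * Real.exp (-t)) := by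
        rw [Real.log_mul two_ne_zero (Real.exp_ne_zero _), Real.log_exp]; ring
    _ ≤ -Real.log M.toReal := neg_le_neg (Real.log_le_log hM0 hM)

theorem le_sSup_driftRates_of_tail_le [IsProbabilityMeasure P]
    (hsupp : ∀ n : ℕ, n ≠ 1 → P {ω | U ω = n} = 0) {q r s : ℝ}
    (hq0 : 0 ≤ q) (hr0 : 0 ≤ r)
    (htail : ∀ n : ℕ, P {ω | U ω ≤ -(n + 1 : ℤ)} ≤ ENNReal.ofReal (q * r ^ n))
    (hs : 0 < s) (hs4 : s ≤ 1 / 4) (hq : q ≤ s ^ 3) (hr : r ≤ 2 * s ^ 3) :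
    (-Real.log s - Real.log 2) / (1 - Real.log s) ≤ sSup (driftRates P U) := by
  set t := -Real.log s with ht
  have hexp : Real.exp (-t) = s := by rw [ht, neg_neg, Real.exp_log hs]
  have hexp' : Real.exp t = s⁻¹ := by rw [ht, Real.exp_neg, Real.exp_log hs]
  have hrs : r * s⁻¹ ≤ 1 / 8 := by
    calc r * s⁻¹ ≤ 2 * s ^ 3 * s⁻¹ := by gcongr
      _ = 2 * s ^ 2 := by field_simp
      _ ≤ 1 / 8 := by nlinarith
  have hgeom : q * s⁻¹ / (1 - r * s⁻¹) ≤ s := by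
    rw [div_le_iff₀ (by linarith)]
    calc q * s⁻¹ ≤ s ^ 3 * s⁻¹ := by gcongr
      _ = s * s := by field_simp
      _ ≤ s * (1 - r * s⁻¹) := by gcongr; linarith
  have hlog : Real.log 2 < t := by
    rw [ht, lt_neg, ← Real.log_inv]
    exact Real.log_lt_log hs (by linarith)
  convert le_sSup_driftRates hU h1 hlog ?_ using 2
  · ring
  calc _ ≤ P {ω | U ω = 1} * ENNReal.ofReal s
        + ENNReal.ofReal (q * s⁻¹ / (1 - r * s⁻¹)) := by
        have := lintegral_exp_le_of_tail_le hU hq0 hr0 (by rw [hexp']; linarith) hsupp htail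
        rwa [hexp, hexp'] at this
    _ ≤ ENNReal.ofReal s + ENNReal.ofReal s := by
        gcongr
        exact mul_le_of_le_one_left zero_le prob_le_one
    _ = ENNReal.ofReal (2 * Real.exp (-t)) := by
        rw [hexp, ← ENNReal.ofReal_add hs.le hs.le, two_mul]

end

theorem sSup_driftRates_mem_of_law [IsProbabilityMeasure P] (hU : Measurable U) {b c d : ℝ}
    (hb : 0 < b) (hc : 0 ≤ c) (hd : 0 < d) (hsmall : (b + c) / d ≤ 1 / 64)
    (h1 : P {ω | U ω = 1} = ENNReal.ofReal ((d - (b + c)) / d))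
    (h2 : ∀ j : ℕ, 1 ≤ j → P {ω | U ω ≤ -(j : ℤ)} =
      ENNReal.ofReal (((b + c) / d) * (b / (d - (b + c))) ^ (j - 1)))
    (h0 : ∀ k : ℤ, k ≠ 1 → ¬ k ≤ -1 → P {ω | U ω = k} = 0) :
    sSup (driftRates P U) ∈ Set.Icc
      ((-Real.log (((b + c) / d) ^ (1 / 3 : ℝ)) - Real.log 2)
        / (1 - Real.log (((b + c) / d) ^ (1 / 3 : ℝ)))) 1 := by
  set q := (b + c) / d with hq
  set s := q ^ (1 / 3 : ℝ) with hs
  have hq0 : 0 < q := by positivity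
  have hs0 : 0 < s := by positivity
  have hs3 : s ^ 3 = q := by
    rw [hs, ← Real.rpow_natCast, ← Real.rpow_mul hq0.le]; norm_num
  have hs4 : s ≤ 1 / 4 :=
    le_of_pow_le_pow_left₀ three_ne_zero (by norm_num) (by rw [hs3]; linarith)
  have hbcd : 64 * (b + c) ≤ d := by rw [hq, div_le_iff₀ hd] at hsmall; linarith
  have hr : b / (d - (b + c)) ≤ 2 * s ^ 3 := by
    rw [hs3, hq, ← mul_div_assoc, div_le_div_iff₀ (by linarith) hd]
    nlinarith
  have h1' : ENNReal.ofReal (Real.exp (-1)) ≤ P {ω | U ω = 1} := by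
    rw [h1, ← one_sub_div hd.ne']
    exact ENNReal.ofReal_le_ofReal (by linarith [Real.exp_neg_one_lt_half])
  have htail (n : ℕ) :
      P {ω | U ω ≤ -(n + 1 : ℤ)} ≤ ENNReal.ofReal (q * (b / (d - (b + c))) ^ n) := by
    have := h2 (n + 1) (by omega)
    push_cast at this
    exact this.le
  exact ⟨le_sSup_driftRates_of_tail_le hU h1'
      (fun n hn ↦ h0 n (by exact_mod_cast hn) (by omega))
      hq0.le (div_nonneg hb.le (by linarith)) htail hs0 hs4 hs3.ge hr,
    Real.sSup_le (driftRates_le_one hU h1') zero_le_one⟩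

end ExpMoment

theorem tendsto_div_natCast_of_tendsto_div_rpow {f : ℕ → ℝ} {β : ℝ} (hf : ∀ n, 0 ≤ f n)
    (hβ : β ≤ 1) (h : Tendsto (fun n ↦ f n / (n : ℝ) ^ β) atTop (𝓝 0)) :
    Tendsto (fun n ↦ f n / n) atTop (𝓝 0) := by
  refine tendsto_of_tendsto_of_tendsto_of_le_of_le' tendsto_const_nhds h
    (Eventually.of_forall fun n ↦ div_nonneg (hf n) n.cast_nonneg) ?_
  filter_upwards [eventually_ge_atTop 1] with n hn
  have hn' : (1 : ℝ) ≤ n := by exact_mod_cast hn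
  refine div_le_div_of_nonneg_left (hf n) (Real.rpow_pos_of_pos (by linarith) _) ?_
  simpa using Real.rpow_le_rpow_of_exponent_le hn' hβ

theorem tendsto_neg_log_sub_log_two_div_one_sub_log :
    Tendsto (fun s ↦ (-Real.log s - Real.log 2) / (1 - Real.log s)) (𝓝[>] 0) (𝓝 1) := by
  have hu : Tendsto (fun s ↦ -Real.log s) (𝓝[>] 0) atTop :=
    tendsto_neg_atBot_atTop.comp Real.tendsto_log_nhdsGT_zero
  have hlim : Tendsto (fun u : ℝ ↦ 1 - (1 + Real.log 2) / (1 + u)) atTop (𝓝 1) := by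
    simpa using (tendsto_const_nhds (x := (1 : ℝ))).sub
      ((tendsto_const_nhds (x := 1 + Real.log 2)).div_atTop
        (tendsto_atTop_add_const_left atTop (1 : ℝ) tendsto_id))
  refine (hlim.comp hu).congr' ?_
  filter_upwards [hu.eventually_gt_atTop 0] with s hs
  have : 1 - Real.log s ≠ 0 := by linarith
  simp only [Function.comp_apply, ← sub_eq_add_neg]
  field_simp
  ring

theorem drift_estimate_tendsto_one_general (α : ℝ) (hα : α ∈ Set.Ioo (0:ℝ) (1/2 : ℝ))
    (B C : ℕ → ℕ) (hBpos : ∀ D, 0 < B D)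
    (hB : Filter.Tendsto (fun D : ℕ => (B D : ℝ) / (D:ℝ) ^ ((1:ℝ) - 2 * α))
      Filter.atTop (nhds 0))
    (hC : Filter.Tendsto (fun D : ℕ => (C D : ℝ) / (D:ℝ) ^ ((1:ℝ) - 2 * α))
      Filter.atTop (nhds 0))
    (Ω : ℕ → Type*) [∀ D, MeasurableSpace (Ω D)]
    (P : ∀ D, Measure (Ω D)) (hP : ∀ D, IsProbabilityMeasure (P D))
    (U : ∀ D, Ω D → ℤ) (hU : ∀ D, Measurable (U D))
    (hU1 : ∀ D, D > 3 * B D + 2 * C D →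
      P D {ω | U D ω = 1} =
        ENNReal.ofReal (((D:ℝ) - ((B D : ℝ) + (C D : ℝ))) / (D:ℝ)))
    (hU2 : ∀ D, D > 3 * B D + 2 * C D → ∀ j : ℕ, 1 ≤ j →
      P D {ω | U D ω ≤ -(j:ℤ)} =
        ENNReal.ofReal ((((B D : ℝ) + (C D : ℝ)) / (D:ℝ)) *
          ((B D : ℝ) / ((D:ℝ) - ((B D : ℝ) + (C D : ℝ)))) ^ (j - 1)))
    (hU0 : ∀ D, D > 3 * B D + 2 * C D → ∀ k : ℤ, k ≠ 1 → ¬ k ≤ -1 →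
      P D {ω | U D ω = k} = 0) :
    Filter.Tendsto (fun D : ℕ =>
      sSup { x : ℝ | ∃ t : ℝ, 0 < t ∧
        (∫⁻ ω, ENNReal.ofReal (Real.exp (-t * (U D ω : ℝ))) ∂(P D)) < 1 ∧
        x = (- Real.log
            ((∫⁻ ω, ENNReal.ofReal (Real.exp (-t * (U D ω : ℝ))) ∂(P D)).toReal))
          / (1 + t) })
      Filter.atTop (nhds 1) := by
  set q : ℕ → ℝ := fun D ↦ ((B D : ℝ) + C D) / D
  have hq : Tendsto q atTop (𝓝 0) := by
    have hβ : 1 - 2 * α ≤ 1 := by linarith [hα.1]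
    simpa [q, add_div] using
      (tendsto_div_natCast_of_tendsto_div_rpow (fun D ↦ (B D).cast_nonneg) hβ hB).add
        (tendsto_div_natCast_of_tendsto_div_rpow (fun D ↦ (C D).cast_nonneg) hβ hC)
  have hs : Tendsto (fun D ↦ q D ^ (1 / 3 : ℝ)) atTop (𝓝[>] 0) := by
    refine tendsto_nhdsWithin_of_tendsto_nhds_of_eventually_within _
      (by simpa using hq.rpow_const (p := 1 / 3) (Or.inr (by norm_num))) ?_
    filter_upwards [eventually_gt_atTop 0] with D hD
    have := hBpos D
    exact Real.rpow_pos_of_pos (by positivity) _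
  have hbounds : ∀ᶠ D in atTop, sSup (driftRates (P D) (U D)) ∈ Set.Icc
      ((-Real.log (q D ^ (1 / 3 : ℝ)) - Real.log 2)
        / (1 - Real.log (q D ^ (1 / 3 : ℝ)))) 1 := by
    filter_upwards [eventually_gt_atTop 0,
      hq.eventually (gt_mem_nhds (by norm_num : (0 : ℝ) < 1 / 64))] with D hD hsmall
    have hD' : (0 : ℝ) < D := by exact_mod_cast hD
    have hDgt : D > 3 * B D + 2 * C D := by
      have : (B D : ℝ) + C D < D / 64 := by
        rwa [div_lt_iff₀ hD', div_mul_eq_mul_div, one_mul] at hsmall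
      exact_mod_cast (by push_cast; linarith : ((3 * B D + 2 * C D : ℕ) : ℝ) < D)
    have := hP D
    exact sSup_driftRates_mem_of_law (hU D) (by exact_mod_cast hBpos D) (C D).cast_nonneg hD'
      hsmall.le (hU1 D hDgt) (hU2 D hDgt) (hU0 D hDgt)
  exact tendsto_of_tendsto_of_tendsto_of_le_of_le'
    (tendsto_neg_log_sub_log_two_div_one_sub_log.comp hs) tendsto_const_nhds
    (hbounds.mono fun _ h ↦ h.1) (hbounds.mono fun _ h ↦ h.2)

/-- If `B_D, C_D = o(D^{1-2α})` for some `α ∈ (0, 1/2)`, then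
the drift estimate `sup_{t ∈ T_D} (-ln E[e^{-t U_D}])/(1+t)` tends to `1` as
`D → ∞`. -/
theorem drift_estimate_tendsto_one (α : ℝ) (hα : α ∈ Set.Ioo (0:ℝ) (1/2 : ℝ))
    (B C : ℕ → ℕ) (hBpos : ∀ D, 0 < B D) (hCpos : ∀ D, 0 < C D)
    (hB : Filter.Tendsto (fun D : ℕ => (B D : ℝ) / (D:ℝ) ^ ((1:ℝ) - 2 * α))
      Filter.atTop (nhds 0))
    (hC : Filter.Tendsto (fun D : ℕ => (C D : ℝ) / (D:ℝ) ^ ((1:ℝ) - 2 * α))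
      Filter.atTop (nhds 0))
    (Ω : ℕ → Type*) [∀ D, MeasurableSpace (Ω D)]
    (P : ∀ D, Measure (Ω D)) (hP : ∀ D, IsProbabilityMeasure (P D))
    (U : ∀ D, Ω D → ℤ) (hU : ∀ D, Measurable (U D))
    (hU1 : ∀ D, D > 3 * B D + 2 * C D →
      P D {ω | U D ω = 1} =
        ENNReal.ofReal (((D:ℝ) - ((B D : ℝ) + (C D : ℝ))) / (D:ℝ)))
    (hU2 : ∀ D, D > 3 * B D + 2 * C D → ∀ j : ℕ, 1 ≤ j →
      P D {ω | U D ω ≤ -(j:ℤ)} =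
        ENNReal.ofReal ((((B D : ℝ) + (C D : ℝ)) / (D:ℝ)) *
          ((B D : ℝ) / ((D:ℝ) - ((B D : ℝ) + (C D : ℝ)))) ^ (j - 1)))
    (hU0 : ∀ D, D > 3 * B D + 2 * C D → ∀ k : ℤ, k ≠ 1 → ¬ k ≤ -1 →
      P D {ω | U D ω = k} = 0) :
    Filter.Tendsto (fun D : ℕ =>
      sSup { x : ℝ | ∃ t : ℝ, 0 < t ∧
        (∫⁻ ω, ENNReal.ofReal (Real.exp (-t * (U D ω : ℝ))) ∂(P D)) < 1 ∧
        x = (- Real.log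
            ((∫⁻ ω, ENNReal.ofReal (Real.exp (-t * (U D ω : ℝ))) ∂(P D)).toReal))
          / (1 + t) })
      Filter.atTop (nhds 1) :=
  drift_estimate_tendsto_one_general α hα B C hBpos hB hC Ω P hP U hU hU1 hU2 hU0
end
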